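/- arXiv:1701.06469 — 8 statements merged into one kernel-verified Lean document; each statement's English description precedes it below -/
import Mathlib

section
/- If an infinite word w over {0,1} satisfies Comp_w(n) ≤ n for some n ≥ 1, then w is eventually periodic. -/
open Filter Topology

/-- The set of factors (contiguous subwords) of length `n` of the infinite word `w`. -/
def Factors (w : ℕ → Fin 2) (n : ℕ) : Set (Fin n → Fin 2) :=
  {v | ∃ i : ℕ, ∀ j : Fin n, v j = w (i + j)}

/-- The complexity function: number of distinct factors of length `n`. -/
noncomputable def Comp (w : ℕ → Fin 2) (n : ℕ) : ℕ := (Factors w n).ncard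

/-- The height of a finite word: the number of letters equal to `1`. -/
def hcount {n : ℕ} (v : Fin n → Fin 2) : ℕ := (Finset.univ.filter fun j => v j = 1).card

/-- Number of `1`'s among `w 0, …, w (n-1)` (height of the prefix of length `n`). -/
def pcount (w : ℕ → Fin 2) (n : ℕ) : ℕ := ((Finset.range n).filter fun i => w i = 1).card

lemma factors_eq_image (w : ℕ → Fin 2) (m : ℕ) :
    Factors w m =
      (fun (v : Fin (m+1) → Fin 2) (j : Fin m) => v j.castSucc) '' Factors w (m+1) := by
  ext u
  constructor
  · rintro ⟨i, hi⟩
    refine ⟨fun j => w (i + j), ⟨i, fun j => rfl⟩, ?_⟩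
    funext j
    simpa [Fin.coe_castSucc] using (hi j).symm
  · rintro ⟨v, ⟨i, hv⟩, rfl⟩
    exact ⟨i, fun j => by simpa [Fin.coe_castSucc] using hv j.castSucc⟩

lemma comp_mono (w : ℕ → Fin 2) (m : ℕ) : Comp w m ≤ Comp w (m+1) := by
  rw [Comp, Comp, factors_eq_image]
  exact Set.ncard_image_le (Set.toFinite _)

lemma comp_zero (w : ℕ → Fin 2) : Comp w 0 = 1 := by
  have : Factors w 0 = Set.univ := by
    ext v
    simp only [Set.mem_univ, iff_true]
    exact ⟨0, fun j => j.elim0⟩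
  rw [Comp, this, Set.ncard_univ, Nat.card_eq_fintype_card]
  simp

/-- Morse–Hedlund: if `Comp w n ≤ n` for some `n ≥ 1`,
then `w` is eventually periodic. -/
theorem eventually_periodic_of_complexity_le (w : ℕ → Fin 2) (n : ℕ) (hn : 1 ≤ n)
    (h : Comp w n ≤ n) :
    ∃ N T : ℕ, 1 ≤ T ∧ ∀ i : ℕ, N ≤ i → w i = w (i + T) := by
  -- find a plateau m with Comp w (m+1) ≤ Comp w m
  obtain ⟨m, hmn, hplateau⟩ : ∃ m, m < n ∧ Comp w (m+1) ≤ Comp w m := by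
    by_contra hc
    push_neg at hc
    have key : ∀ k, k ≤ n → k + 1 ≤ Comp w k := by
      intro k
      induction k with
      | zero => intro _; simp [comp_zero]
      | succ k ih =>
        intro hk
        have h1 := ih (Nat.le_of_succ_le hk)
        have h2 := hc k (Nat.lt_of_succ_le hk)
        omega
    have := key n le_rfl
    omega
  -- unique right extension of length-m factors
  have key : ∀ i i' : ℕ, (∀ j, j < m → w (i + j) = w (i' + j)) → w (i + m) = w (i' + m) := by
    intro i i' hii
    by_contra hne
    set r := fun (v : Fin (m+1) → Fin 2) (j : Fin m) => v j.castSucc with hr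
    set v1 : Fin (m+1) → Fin 2 := fun j => w (i + j) with hv1
    set v2 : Fin (m+1) → Fin 2 := fun j => w (i' + j) with hv2
    have hv1m : v1 ∈ Factors w (m+1) := ⟨i, fun j => rfl⟩
    have hv2m : v2 ∈ Factors w (m+1) := ⟨i', fun j => rfl⟩
    have hne12 : v1 ≠ v2 := by
      intro hEq
      apply hne
      have := congrFun hEq (Fin.last m)
      simpa [hv1, hv2, Fin.val_last] using this
    have hr12 : r v1 = r v2 := by
      funext j
      simp only [hr, hv1, hv2]
      exact hii j j.isLt
    have hsub : Factors w m ⊆ r '' (Factors w (m+1) \ {v1}) := by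
      rintro u ⟨a, ha⟩
      set va : Fin (m+1) → Fin 2 := fun j => w (a + j) with hva
      have hvam : va ∈ Factors w (m+1) := ⟨a, fun j => rfl⟩
      have hru : r va = u := by
        funext j
        simp only [hr, hva]
        exact (ha j).symm
      by_cases hcase : va = v1
      · refine ⟨v2, ⟨hv2m, fun hx => hne12 ?_⟩, by rw [← hr12, ← hcase, hru]⟩
        rw [Set.mem_singleton_iff] at hx
        rw [hx]
      · exact ⟨va, ⟨hvam, hcase⟩, hru⟩
    have h1 : Comp w m ≤ (Factors w (m+1) \ {v1}).ncard :=
      le_trans (Set.ncard_le_ncard hsub (Set.toFinite _)) (Set.ncard_image_le (Set.toFinite _))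
    have h2 : (Factors w (m+1) \ {v1}).ncard < Comp w (m+1) :=
      Set.ncard_diff_singleton_lt_of_mem hv1m (Set.toFinite _)
    omega
  -- pigeonhole
  obtain ⟨a, b, hab, hfab⟩ : ∃ a b : ℕ, a < b ∧
      ∀ j, j < m → w (a + j) = w (b + j) := by
    have : ∃ a b : ℕ, a ≠ b ∧
        (fun i (j : Fin m) => w (i + j)) a = (fun i (j : Fin m) => w (i + j)) b := by
      obtain ⟨a, b, hne, heq⟩ := Finite.exists_ne_map_eq_of_infinite
        (fun i (j : Fin m) => w (i + j))
      exact ⟨a, b, hne, heq⟩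
    obtain ⟨a, b, hne, heq⟩ := this
    rcases Nat.lt_or_ge a b with hlt | hge
    · exact ⟨a, b, hlt, fun j hj => congrFun heq ⟨j, hj⟩⟩
    · exact ⟨b, a, by omega, fun j hj => (congrFun heq ⟨j, hj⟩).symm⟩
  refine ⟨a, b - a, by omega, ?_⟩
  have main : ∀ k, w (a + k) = w (b + k) := by
    intro k
    induction k using Nat.strong_induction_on with
    | _ k ih =>
      rcases Nat.lt_or_ge k m with hk | hk
      · exact hfab k hk
      · have : ∀ j, j < m → w ((a + (k - m)) + j) = w ((b + (k - m)) + j) := by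
          intro j hj
          have := ih (k - m + j) (by omega)
          rw [show a + (k - m) + j = a + (k - m + j) by omega,
              show b + (k - m) + j = b + (k - m + j) by omega]
          exact this
        have := key (a + (k - m)) (b + (k - m)) this
        rw [show a + (k - m) + m = a + k by omega, show b + (k - m) + m = b + k by omega] at this
        exact this
  intro i hi
  have := main (i - a)
  rw [show a + (i - a) = i by omega] at this
  rw [this]
  congr 1
  omega
end

section
/- Let w be a Sturmian word over {0,1}, i.e., an infinite word with Comp_w(n) = n+1 for all n ≥ 1. Then for any two factors x, y of w of the same length, |h(x) − h(y)| ≤ 1, where h counts the number of occurrences of the letter 1. -/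
open Filter Topology

/-!
A binary word of complexity `n + 1` has exactly one right special factor of each length, and all
its factors recur, because dropping the first letter loses at most one factor of each length.
A shortest unbalanced pair of factors has the form `1u1`, `0u0`. One of `00`, `11` is not a
factor; exchanging the letters if necessary, the word splits into blocks `0` and `01`, and the
derived word recording the block types is again Sturmian, since its right special factors expand
to right special factors of the original word. An occurrence of `0u` and one of `01u1` (a factor
recurs, so `1u1` occurs preceded by a letter, necessarily `0`) both consist of whole blocks; they
decode to factors of the derived word of equal length, shorter than `1u1`, whose heights differ
by `2`. Unbalanced pairs could thus be shortened forever.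
-/

namespace InfiniteWord

def height (l : List (Fin 2)) : ℕ := (l.map Fin.val).sum

@[simp] lemma height_nil : height [] = 0 := rfl

@[simp] lemma height_cons (a : Fin 2) (l : List (Fin 2)) : height (a :: l) = a.val + height l := by
  simp [height]

@[simp] lemma height_append (l₁ l₂ : List (Fin 2)) :
    height (l₁ ++ l₂) = height l₁ + height l₂ := by
  simp [height]

lemma height_le_length (l : List (Fin 2)) : height l ≤ l.length := by
  induction l with
  | nil => simp
  | cons a l ih => simp only [height_cons, List.length_cons]; omega

variable (w : ℕ → Fin 2)

def window (i n : ℕ) : List (Fin 2) := List.ofFn fun j : Fin n => w (i + j)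

def IsFactor (l : List (Fin 2)) : Prop := ∃ i, window w i l.length = l

def IsRightSpecial (v : List (Fin 2)) : Prop := IsFactor w (v ++ [0]) ∧ IsFactor w (v ++ [1])

def rightSpecials (n : ℕ) : Set (List (Fin 2)) := {v | v.length = n ∧ IsRightSpecial w v}

def IsSturmian : Prop := ∀ n, Comp w n = n + 1

def HasUnbalancedPair (n : ℕ) : Prop :=
  ∃ i j, height (window w j n) + 2 ≤ height (window w i n)

variable {w}

@[simp] lemma length_window (i n : ℕ) : (window w i n).length = n := by simp [window]

lemma window_add (i a b : ℕ) : window w i (a + b) = window w i a ++ window w (i + a) b := by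
  simp only [window, List.ofFn_add]
  congr 2 with j
  simp [Nat.add_assoc]

@[simp] lemma window_zero (i : ℕ) : window w i 0 = [] := rfl

lemma window_one (i : ℕ) : window w i 1 = [w i] := by simp [window]

lemma window_succ (i n : ℕ) : window w i (n + 1) = window w i n ++ [w (i + n)] := by
  rw [window_add, window_one]

lemma window_succ' (i n : ℕ) : window w i (n + 1) = w i :: window w (i + 1) n := by
  rw [Nat.add_comm n, window_add, window_one]; rfl

lemma window_add_two (i k : ℕ) :
    window w i (k + 2) = w i :: window w (i + 1) k ++ [w (i + k + 1)] := by
  rw [window_succ, window_succ']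
  rfl

lemma window_eq_cons_append_singleton_iff {q k : ℕ} {a b : Fin 2} {u : List (Fin 2)} :
    window w q (k + 2) = a :: u ++ [b] ↔
      w q = a ∧ window w (q + 1) k = u ∧ w (q + k + 1) = b := by
  rw [window_add_two]
  simp

lemma isFactor_window (i n : ℕ) : IsFactor w (window w i n) := ⟨i, by simp⟩

lemma IsFactor.of_append_left {l₁ l₂ : List (Fin 2)} (h : IsFactor w (l₁ ++ l₂)) :
    IsFactor w l₁ := by
  obtain ⟨i, hi⟩ := h
  rw [List.length_append, window_add] at hi
  exact ⟨i, (List.append_inj hi (by simp)).1⟩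

lemma IsFactor.of_append_right {l₁ l₂ : List (Fin 2)} (h : IsFactor w (l₁ ++ l₂)) :
    IsFactor w l₂ := by
  obtain ⟨i, hi⟩ := h
  rw [List.length_append, window_add] at hi
  exact ⟨i + l₁.length, (List.append_inj hi (by simp)).2⟩

lemma IsFactor.exists_append_singleton {v : List (Fin 2)} (h : IsFactor w v) :
    ∃ a, IsFactor w (v ++ [a]) := by
  obtain ⟨i, hi⟩ := h
  exact ⟨w (i + v.length), i, by simp [window_succ, hi]⟩

lemma range_window (n : ℕ) :
    Set.range (window w · n) = {l | l.length = n ∧ IsFactor w l} := by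
  ext l
  constructor
  · rintro ⟨i, rfl⟩
    exact ⟨length_window i n, isFactor_window i n⟩
  · rintro ⟨rfl, i, hi⟩
    exact ⟨i, hi⟩

lemma finite_range_window (n : ℕ) : (Set.range (window w · n)).Finite := by
  rw [range_window]
  exact (List.finite_length_eq _ n).subset fun _ hl => hl.1

lemma comp_eq_ncard_range (n : ℕ) : Comp w n = (Set.range (window w · n)).ncard := by
  have : Set.range (window w · n) = List.ofFn '' Factors w n := by
    ext l
    constructor
    · rintro ⟨i, rfl⟩
      exact ⟨_, ⟨i, fun _ => rfl⟩, rfl⟩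
    · rintro ⟨v, ⟨i, hi⟩, rfl⟩
      exact ⟨i, (congrArg List.ofFn (funext hi)).symm⟩
  rw [this, Set.ncard_image_of_injective _ List.ofFn_injective, Comp]

lemma comp_eq_ncard (n : ℕ) : Comp w n = {l | l.length = n ∧ IsFactor w l}.ncard := by
  rw [comp_eq_ncard_range, range_window]

lemma comp_zero : Comp w 0 = 1 := by
  rw [comp_eq_ncard_range, Set.ncard_eq_one]
  exact ⟨[], Set.range_const⟩

theorem comp_succ (n : ℕ) :
    Comp w (n + 1) = Comp w n + (rightSpecials w n).ncard := by
  set A : Fin 2 → Set (List (Fin 2)) := fun a => {v | v.length = n ∧ IsFactor w (v ++ [a])}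
  have hfin (a : Fin 2) : (A a).Finite :=
    (List.finite_length_eq _ n).subset fun v hv => hv.1
  have hunion : A 0 ∪ A 1 = {l | l.length = n ∧ IsFactor w l} := by
    ext v
    constructor
    · rintro (⟨hv, h⟩ | ⟨hv, h⟩) <;> exact ⟨hv, h.of_append_left⟩
    · rintro ⟨hv, h⟩
      obtain ⟨a, ha⟩ := h.exists_append_singleton
      fin_cases a
      exacts [Or.inl ⟨hv, ha⟩, Or.inr ⟨hv, ha⟩]
  have hsplit : {l | l.length = n + 1 ∧ IsFactor w l} =
      (· ++ [0]) '' A 0 ∪ (· ++ [1]) '' A 1 := by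
    ext l
    constructor
    · rintro ⟨hl, h⟩
      obtain ⟨v, a, rfl⟩ := l.eq_nil_or_concat' |>.resolve_left (by rintro rfl; simp at hl)
      have hv : v.length = n := by simpa using hl
      fin_cases a
      exacts [Or.inl ⟨v, ⟨hv, h⟩, rfl⟩, Or.inr ⟨v, ⟨hv, h⟩, rfl⟩]
    · rintro (⟨v, ⟨hv, h⟩, rfl⟩ | ⟨v, ⟨hv, h⟩, rfl⟩) <;>
        exact ⟨by simp [hv], h⟩
  have hdisj : Disjoint ((· ++ [0]) '' A 0) ((· ++ [1]) '' A 1) := by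
    rw [Set.disjoint_left]
    rintro _ ⟨v, -, rfl⟩ ⟨v', -, h⟩
    simpa using congrArg List.getLast? h
  rw [comp_eq_ncard, comp_eq_ncard, hsplit, Set.ncard_union_eq hdisj ((hfin 0).image _)
    ((hfin 1).image _), Set.ncard_image_of_injective _ (List.append_left_injective [0]),
    Set.ncard_image_of_injective _ (List.append_left_injective [1]), ← hunion,
    ← Set.ncard_union_add_ncard_inter _ _ (hfin 0) (hfin 1)]
  congr 2
  ext v
  simp only [A, rightSpecials, IsRightSpecial, Set.mem_inter_iff, Set.mem_ofPred_eq]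
  tauto

lemma IsRightSpecial.of_append {u v : List (Fin 2)} (h : IsRightSpecial w (u ++ v)) :
    IsRightSpecial w v := by
  constructor
  · exact (by simpa using h.1 : IsFactor w (u ++ (v ++ [0]))).of_append_right
  · exact (by simpa using h.2 : IsFactor w (u ++ (v ++ [1]))).of_append_right

lemma IsRightSpecial.of_cons {a : Fin 2} {v : List (Fin 2)} (h : IsRightSpecial w (a :: v)) :
    IsRightSpecial w v :=
  IsRightSpecial.of_append (u := [a]) h

lemma rightSpecials_nonempty_of_le {m n : ℕ} (hnm : n ≤ m) (h : (rightSpecials w m).Nonempty) :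
    (rightSpecials w n).Nonempty := by
  obtain ⟨v, hv, hrs⟩ := h
  refine ⟨v.drop (m - n), by simp; omega, ?_⟩
  rw [← List.take_append_drop (m - n) v] at hrs
  exact hrs.of_append

lemma comp_monotone : Monotone (Comp w) :=
  monotone_nat_of_le_succ fun n => by rw [comp_succ]; omega

lemma comp_le_of_rightSpecials_eq_empty {n : ℕ} (h : rightSpecials w n = ∅) (m : ℕ) :
    Comp w m ≤ Comp w n := by
  rcases le_total m n with hmn | hnm
  · exact comp_monotone hmn
  induction m, hnm using Nat.le_induction with
  | base => rfl
  | succ m hnm ih =>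
    have hm : rightSpecials w m = ∅ := Set.not_nonempty_iff_eq_empty.1 fun hne =>
      (rightSpecials_nonempty_of_le hnm hne).ne_empty h
    rw [comp_succ, hm, Set.ncard_empty]
    exact ih

lemma rightSpecials_nonempty (hw : ∀ C, ∃ m, C < Comp w m) (n : ℕ) :
    (rightSpecials w n).Nonempty := by
  by_contra h
  obtain ⟨m, hm⟩ := hw (Comp w n)
  exact (comp_le_of_rightSpecials_eq_empty (Set.not_nonempty_iff_eq_empty.1 h) m).not_gt hm

lemma exists_rightSpecial_cons_of_ne {v v' : List (Fin 2)} (h : IsRightSpecial w v)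
    (h' : IsRightSpecial w v') (hlen : v.length = v'.length) (hne : v ≠ v') :
    ∃ s, IsRightSpecial w (0 :: s) ∧ IsRightSpecial w (1 :: s) := by
  induction v generalizing v' with
  | nil => exact absurd (List.length_eq_zero_iff.1 hlen.symm).symm hne
  | cons a t ih =>
    obtain ⟨b, t', rfl⟩ := List.exists_cons_of_length_eq_add_one hlen.symm
    by_cases ht : t = t'
    · subst ht
      have hab : a ≠ b := fun hab => hne (hab ▸ rfl)
      fin_cases a <;> fin_cases b
      exacts [absurd rfl hab, ⟨t, h, h'⟩, ⟨t, h', h⟩, absurd rfl hab]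
    · exact ih h.of_cons h'.of_cons (by simpa using hlen) ht

lemma rightSpecials_subsingleton_iff :
    (∀ n, (rightSpecials w n).Subsingleton) ↔
      ¬∃ s, IsRightSpecial w (0 :: s) ∧ IsRightSpecial w (1 :: s) := by
  constructor
  · rintro h ⟨s, h0, h1⟩
    exact absurd (h (s.length + 1) ⟨rfl, h0⟩ ⟨rfl, h1⟩) (by simp)
  · intro h n v ⟨hv, hrs⟩ v' ⟨hv', hrs'⟩
    by_contra hne
    exact h (exists_rightSpecial_cons_of_ne hrs hrs' (hv.trans hv'.symm) hne)

theorem isSturmian_iff :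
    IsSturmian w ↔ (∀ C, ∃ m, C < Comp w m) ∧ ∀ n, (rightSpecials w n).Subsingleton := by
  constructor
  · intro hw
    refine ⟨fun C => ⟨C, by rw [hw]; omega⟩, fun n => ?_⟩
    have h := comp_succ (w := w) n
    rw [hw, hw] at h
    obtain ⟨v, hv⟩ := Set.ncard_eq_one.1 (by omega : (rightSpecials w n).ncard = 1)
    exact hv ▸ Set.subsingleton_singleton
  · rintro ⟨hunb, huniq⟩ n
    induction n with
    | zero => exact comp_zero
    | succ n ih =>
      obtain ⟨v, hv⟩ := rightSpecials_nonempty hunb n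
      rw [comp_succ, ih, (huniq n).eq_singleton_of_mem hv, Set.ncard_singleton]

lemma window_shift (i n : ℕ) : window (fun k => w (k + 1)) i n = window w (i + 1) n := by
  simp only [window, Nat.add_right_comm]

lemma IsFactor.of_shift {l : List (Fin 2)} (h : IsFactor (fun k => w (k + 1)) l) :
    IsFactor w l := by
  obtain ⟨i, hi⟩ := h
  exact ⟨i + 1, by rwa [window_shift] at hi⟩

lemma comp_le_comp_shift_add_one (n : ℕ) : Comp w n ≤ Comp (fun k => w (k + 1)) n + 1 := by
  rw [comp_eq_ncard_range, comp_eq_ncard_range]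
  refine (Set.ncard_le_ncard (t := insert (window w 0 n) _) ?_
    ((finite_range_window n).insert _)).trans (Set.ncard_insert_le _ _)
  rintro _ ⟨_ | i, rfl⟩
  · exact Set.mem_insert _ _
  · exact Set.mem_insert_of_mem _ ⟨i, window_shift i n⟩

lemma window_two (i : ℕ) : window w i 2 = [w i, w (i + 1)] := by
  rw [window_succ', window_one]

lemma isFactor_pair_iff {a b : Fin 2} : IsFactor w [a, b] ↔ ∃ i, w i = a ∧ w (i + 1) = b := by
  simp [IsFactor, window_two]

lemma window_rev (i n : ℕ) : window (fun k => (w k).rev) i n = (window w i n).map Fin.rev := by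
  simp [window, List.map_ofFn, Function.comp_def]

lemma isFactor_rev_iff {l : List (Fin 2)} :
    IsFactor (fun k => (w k).rev) (l.map Fin.rev) ↔ IsFactor w l := by
  simp only [IsFactor, window_rev, List.length_map,
    (List.map_injective_iff.2 Fin.rev_injective).eq_iff]

lemma comp_rev (n : ℕ) : Comp (fun k => (w k).rev) n = Comp w n := by
  rw [comp_eq_ncard_range, comp_eq_ncard_range, ← Set.ncard_image_of_injective
    (Set.range (window w · n)) (List.map_injective_iff.2 Fin.rev_injective), ← Set.range_comp]
  simp only [Function.comp_def, window_rev]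

namespace IsSturmian

variable (hw : IsSturmian w)
include hw

lemma shift : IsSturmian fun k => w (k + 1) := by
  obtain ⟨hunb, huniq⟩ := isSturmian_iff.1 hw
  refine isSturmian_iff.2 ⟨fun C => ?_, fun n => (huniq n).anti ?_⟩
  · obtain ⟨m, hm⟩ := hunb (C + 1)
    exact ⟨m, by linarith [comp_le_comp_shift_add_one (w := w) m]⟩
  · exact fun v ⟨hv, h0, h1⟩ => ⟨hv, h0.of_shift, h1.of_shift⟩

lemma isFactor_shift_iff {l : List (Fin 2)} : IsFactor (fun k => w (k + 1)) l ↔ IsFactor w l := by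
  refine ⟨IsFactor.of_shift, fun h => ?_⟩
  obtain ⟨n, hn⟩ : ∃ n, l.length = n := ⟨_, rfl⟩
  have heq : {l | l.length = n ∧ IsFactor (fun k => w (k + 1)) l} =
      {l | l.length = n ∧ IsFactor w l} :=
    Set.eq_of_subset_of_ncard_le (fun _ ⟨hl, h⟩ => ⟨hl, h.of_shift⟩)
      (by rw [← comp_eq_ncard, ← comp_eq_ncard, hw, hw.shift])
      ((List.finite_length_eq _ n).subset fun _ hl => hl.1)
  exact (heq ▸ ⟨hn, h⟩ : l ∈ {l | l.length = n ∧ IsFactor (fun k => w (k + 1)) l}).2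

lemma exists_window_eq {l : List (Fin 2)} (h : IsFactor w l) (k : ℕ) :
    ∃ i, k ≤ i ∧ window w i l.length = l := by
  induction k generalizing w with
  | zero => obtain ⟨i, hi⟩ := h; exact ⟨i, Nat.zero_le i, hi⟩
  | succ k ih =>
    obtain ⟨i, hik, hi⟩ := ih hw.shift (hw.isFactor_shift_iff.2 h)
    exact ⟨i + 1, by omega, by rwa [window_shift] at hi⟩

lemma rev : IsSturmian fun k => (w k).rev := fun n => (comp_rev n).trans (hw n)

lemma isFactor_singleton (a : Fin 2) : IsFactor w [a] := by
  obtain ⟨v, hv, h0, h1⟩ := rightSpecials_nonempty (isSturmian_iff.1 hw).1 0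
  rw [List.length_eq_zero_iff.1 hv] at h0 h1
  fin_cases a
  exacts [h0, h1]

lemma isFactor_pair_of_ne {a b : Fin 2} (hab : a ≠ b) : IsFactor w [a, b] := by
  obtain ⟨i, hi⟩ := hw.isFactor_singleton a
  obtain ⟨p, hip, hp⟩ := hw.exists_window_eq (hw.isFactor_singleton b) i
  simp only [List.length_singleton, window_one, List.cons.injEq, and_true] at hi hp
  by_contra hne
  have hconst (t : ℕ) : w (i + t) = a := by
    induction t with
    | zero => exact hi
    | succ t ih =>
      by_contra hne'
      exact hne (isFactor_pair_iff.2 ⟨i + t, ih, by rw [Nat.add_assoc]; omega⟩)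
  exact hab ((hconst (p - i)).symm.trans (by rw [Nat.add_sub_cancel' hip, hp]))

lemma not_isFactor_zero_zero_or_one_one : ¬IsFactor w [0, 0] ∨ ¬IsFactor w [1, 1] := by
  by_contra! h
  have hsub : ({[0, 0], [0, 1], [1, 0], [1, 1]} : Set (List (Fin 2))) ⊆
      {l | l.length = 2 ∧ IsFactor w l} := by
    rintro _ (rfl | rfl | rfl | rfl)
    exacts [⟨rfl, h.1⟩, ⟨rfl, hw.isFactor_pair_of_ne (by decide)⟩,
      ⟨rfl, hw.isFactor_pair_of_ne (by decide)⟩, ⟨rfl, h.2⟩]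
  have := Set.ncard_le_ncard hsub ((List.finite_length_eq _ 2).subset fun _ hl => hl.1)
  rw [← comp_eq_ncard, hw] at this
  simp [Set.ncard_insert_of_notMem] at this

end IsSturmian

def expand (l : List (Fin 2)) : List (Fin 2) := l.flatMap fun a => 0 :: List.replicate a.val 1

@[simp] lemma expand_nil : expand [] = [] := rfl

@[simp] lemma expand_cons (a : Fin 2) (l : List (Fin 2)) :
    expand (a :: l) = 0 :: List.replicate a.val 1 ++ expand l := rfl

@[simp] lemma expand_append (l₁ l₂ : List (Fin 2)) :
    expand (l₁ ++ l₂) = expand l₁ ++ expand l₂ := List.flatMap_append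

@[simp] lemma height_replicate_one (k : ℕ) : height (List.replicate k 1) = k := by
  simp [height]

@[simp] lemma height_expand (l : List (Fin 2)) : height (expand l) = height l := by
  induction l with
  | nil => rfl
  | cons a l ih => simp [ih]

@[simp] lemma length_expand (l : List (Fin 2)) : (expand l).length = l.length + height l := by
  induction l with
  | nil => rfl
  | cons a l ih => simp [ih]; omega

/- When `w 0 = 0` and `11` is not a factor, `w` splits into blocks `0` and `01`: `blockStart w m`
is where the `m`-th block starts and `derivative w m = 1` iff that block is `01`, so that
`w = expand (derivative w)`. -/
variable (w) in
def blockStart : ℕ → ℕ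
  | 0 => 0
  | m + 1 => blockStart m + 1 + (w (blockStart m + 1)).val

variable (w) in
def derivative (m : ℕ) : Fin 2 := w (blockStart w m + 1)

lemma blockStart_succ (m : ℕ) :
    blockStart w (m + 1) = blockStart w m + 1 + (derivative w m).val := rfl

lemma blockStart_add (m s : ℕ) :
    blockStart w (m + s) = blockStart w m + s + height (window (derivative w) m s) := by
  induction s with
  | zero => simp
  | succ s ih =>
    rw [← Nat.add_assoc, blockStart_succ, ih, window_succ]
    simp
    omega

lemma strictMono_blockStart : StrictMono (blockStart w) :=
  strictMono_nat_of_lt_succ fun m => by rw [blockStart_succ]; omega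

section Parsing

variable (hw0 : w 0 = 0) (h11 : ∀ i, w i = 1 → w (i + 1) = 0)
include hw0 h11

lemma apply_blockStart (m : ℕ) : w (blockStart w m) = 0 := by
  cases m with
  | zero => exact hw0
  | succ m =>
    rw [blockStart_succ, derivative]
    obtain h | h : w (blockStart w m + 1) = 0 ∨ w (blockStart w m + 1) = 1 := by omega
    · simp [h]
    · simpa [h] using h11 _ h

lemma exists_blockStart_eq (j : ℕ) : ∃ m, blockStart w m = j + (w j).val := by
  induction j with
  | zero => exact ⟨0, by simp [blockStart, hw0]⟩
  | succ j ih =>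
    obtain ⟨m, hm⟩ := ih
    obtain h | h : w j = 0 ∨ w j = 1 := by omega
    · refine ⟨m + 1, ?_⟩
      rw [blockStart_succ, derivative]
      simp_all
    · exact ⟨m, by simp_all⟩

lemma window_blockStart (m s : ℕ) :
    window w (blockStart w m) (s + height (window (derivative w) m s)) =
      expand (window (derivative w) m s) := by
  induction s with
  | zero => simp
  | succ s ih =>
    set d := derivative w (m + s) with hd
    have hlast : window w (blockStart w (m + s)) (d.val + 1) = 0 :: List.replicate d.val 1 := by
      rw [window_succ', apply_blockStart hw0 h11]
      obtain h | h : d = 0 ∨ d = 1 := by omega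
      · simp [h]
      · have h' : w (blockStart w (m + s) + 1) = 1 := h
        simp [h, h', window_one]
    have hlen : s + 1 + height (window (derivative w) m (s + 1)) =
        (s + height (window (derivative w) m s)) + (d.val + 1) := by
      rw [window_succ]
      simp
      omega
    rw [hlen, window_add, ih, ← Nat.add_assoc, ← blockStart_add, hlast, window_succ]
    simp [hd]

lemma isFactor_expand_append_zero {x : List (Fin 2)} (hx : IsFactor (derivative w) x) :
    IsFactor w (expand x ++ [0]) := by
  obtain ⟨m, hm⟩ := hx
  rw [← hm]
  generalize x.length = s
  refine ⟨blockStart w m, ?_⟩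
  rw [List.length_append, length_expand, length_window, List.length_singleton, window_succ,
    window_blockStart hw0 h11, ← Nat.add_assoc, ← blockStart_add, apply_blockStart hw0 h11]

lemma IsRightSpecial.expand_append_zero {v : List (Fin 2)} (h : IsRightSpecial (derivative w) v) :
    IsRightSpecial w (expand v ++ [0]) := by
  have h0 := isFactor_expand_append_zero hw0 h11 h.1
  have h1 := isFactor_expand_append_zero hw0 h11 h.2
  refine ⟨by simpa using h0, ?_⟩
  exact (by simpa using h1 : IsFactor w (expand v ++ [0] ++ [1] ++ [0])).of_append_left

lemma not_exists_rightSpecial_cons_derivative (hw : IsSturmian w) :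
    ¬∃ s, IsRightSpecial (derivative w) (0 :: s) ∧ IsRightSpecial (derivative w) (1 :: s) := by
  rintro ⟨s, h0, h1⟩
  refine rightSpecials_subsingleton_iff.1 (isSturmian_iff.1 hw).2 ⟨expand s ++ [0], ?_, ?_⟩
  · simpa using h0.expand_append_zero hw0 h11
  · have h1' : IsRightSpecial w (0 :: 1 :: (expand s ++ [0])) := by
      simpa using h1.expand_append_zero hw0 h11
    exact h1'.of_cons

lemma comp_le_two_mul_comp_derivative (n : ℕ) : Comp w n ≤ 2 * Comp (derivative w) n := by
  rw [comp_eq_ncard_range, comp_eq_ncard_range]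
  set R := Set.range (window (derivative w) · n)
  have hsub : Set.range (window w · n) ⊆
      (fun x => (expand x).take n) '' R ∪ (fun x => (1 :: expand x).take n) '' R := by
    rintro _ ⟨j, rfl⟩
    obtain ⟨m, hm⟩ := exists_blockStart_eq hw0 h11 j
    have hexp := window_blockStart hw0 h11 m n
    obtain h | h : w j = 0 ∨ w j = 1 := by omega
    · refine Or.inl ⟨_, ⟨m, rfl⟩, ?_⟩
      dsimp only
      rw [← hexp, window_add, List.take_left' (length_window _ _), hm, h, Fin.val_zero,
        Nat.add_zero]
    · refine Or.inr ⟨_, ⟨m, rfl⟩, ?_⟩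
      dsimp only
      rw [← hexp, hm, h, Fin.val_one, ← h, ← window_succ', Nat.add_assoc, window_add,
        List.take_left' (length_window _ _)]
  calc (Set.range (window w · n)).ncard
      ≤ ((fun x => (expand x).take n) '' R ∪ (fun x => (1 :: expand x).take n) '' R).ncard :=
        Set.ncard_le_ncard hsub (((finite_range_window n).image _).union
          ((finite_range_window n).image _))
    _ ≤ R.ncard + R.ncard := (Set.ncard_union_le _ _).trans
        (add_le_add (Set.ncard_image_le (finite_range_window n))
          (Set.ncard_image_le (finite_range_window n)))
    _ = 2 * R.ncard := by ring

lemma IsSturmian.derivative (hw : IsSturmian w) : IsSturmian (derivative w) := by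
  refine isSturmian_iff.2 ⟨fun C => ⟨2 * C + 1, ?_⟩,
    rightSpecials_subsingleton_iff.2 (not_exists_rightSpecial_cons_derivative hw0 h11 hw)⟩
  have := comp_le_two_mul_comp_derivative hw0 h11 (2 * C + 1)
  rw [hw] at this
  omega

lemma exists_height_window_derivative {m m' q L : ℕ} (hm : blockStart w m = q)
    (hm' : blockStart w m' = q + L) :
    ∃ s, s + height (window w q L) = L ∧
      height (window (derivative w) m s) = height (window w q L) := by
  have hmm' : m ≤ m' := (strictMono_blockStart (w := w)).le_iff_le.1 (by omega)
  obtain ⟨s, rfl⟩ := Nat.exists_eq_add_of_le hmm'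
  have hL : L = s + height (window (derivative w) m s) := by
    have := blockStart_add (w := w) m s
    omega
  refine ⟨s, ?_, ?_⟩ <;> rw [hL, ← hm, window_blockStart hw0 h11, height_expand]

lemma exists_unbalanced_derivative (hw : IsSturmian w) {u : List (Fin 2)}
    (h1 : IsFactor w (1 :: u ++ [1])) (h0 : IsFactor w (0 :: u ++ [0])) :
    ∃ s < u.length + 2, HasUnbalancedPair (derivative w) s := by
  obtain ⟨q₀, hq₀⟩ := h0
  obtain ⟨q₁, hq₁, hq₁'⟩ := hw.exists_window_eq h1 1
  have hlen (a : Fin 2) : (a :: u ++ [a]).length = u.length + 2 := by simp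
  rw [hlen] at hq₀ hq₁'
  obtain ⟨hq₀a, hq₀u, hq₀b⟩ := window_eq_cons_append_singleton_iff.1 hq₀
  obtain ⟨hq₁a, hq₁u, hq₁b⟩ := window_eq_cons_append_singleton_iff.1 hq₁'
  have hprev : w (q₁ - 1) = 0 := by
    by_contra h
    have := h11 (q₁ - 1) (by omega)
    rw [Nat.sub_add_cancel hq₁] at this
    simp_all
  -- `0u` at `q₀` and `01u1` at `q₁ - 1` both start and end at block boundaries.
  obtain ⟨m₀, hm₀⟩ := exists_blockStart_eq hw0 h11 q₀
  obtain ⟨m₀', hm₀'⟩ := exists_blockStart_eq hw0 h11 (q₀ + u.length + 1)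
  obtain ⟨m₁, hm₁⟩ := exists_blockStart_eq hw0 h11 (q₁ - 1)
  obtain ⟨m₁', hm₁'⟩ := exists_blockStart_eq hw0 h11 (q₁ + u.length + 1)
  rw [hq₀a, Fin.val_zero, Nat.add_zero] at hm₀
  rw [hq₀b, Fin.val_zero, Nat.add_zero, Nat.add_assoc] at hm₀'
  rw [hprev, Fin.val_zero, Nat.add_zero] at hm₁
  rw [hq₁b, Fin.val_one, show q₁ + u.length + 1 + 1 = q₁ - 1 + (u.length + 3) by omega]
    at hm₁'
  have hheight₀ : height (window w q₀ (u.length + 1)) = height u := by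
    rw [window_succ', hq₀u, height_cons, hq₀a, Fin.val_zero, Nat.zero_add]
  have hheight₁ : height (window w (q₁ - 1) (u.length + 3)) = height u + 2 := by
    rw [window_succ', Nat.sub_add_cancel hq₁, hq₁', hprev]
    simp
    omega
  obtain ⟨s₀, hs₀, hh₀⟩ := exists_height_window_derivative hw0 h11 hm₀ hm₀'
  obtain ⟨s₁, hs₁, hh₁⟩ := exists_height_window_derivative hw0 h11 hm₁ hm₁'
  rw [show s₁ = s₀ by omega] at hh₁
  exact ⟨s₀, by omega, m₁, m₀, by omega⟩

end Parsing

lemma exists_eq_of_minimal_unbalanced {k i j : ℕ}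
    (hbal : ∀ n < k + 2, ∀ i j, height (window w i n) ≤ height (window w j n) + 1)
    (h : height (window w j (k + 2)) + 2 ≤ height (window w i (k + 2))) :
    ∃ u, window w i (k + 2) = 1 :: u ++ [1] ∧ window w j (k + 2) = 0 :: u ++ [0] := by
  have hsucc (p t : ℕ) :
      height (window w p (t + 1)) = height (window w p t) + (w (p + t)).val := by
    simp [window_succ]
  -- the prefixes of length `t` and the suffixes of length `k + 2 - t` are balanced pairs
  have hmid (t : ℕ) (ht : 1 ≤ t) (htk : t ≤ k + 1) :
      height (window w i t) = height (window w j t) + 1 := by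
    have hsplit (p : ℕ) : height (window w p (k + 2)) =
        height (window w p t) + height (window w (p + t) (k + 2 - t)) := by
      rw [← height_append, ← window_add, Nat.add_sub_cancel' (by omega)]
    have := hbal t (by omega) i j
    have := hbal (k + 2 - t) (by omega) (i + t) (j + t)
    have := hsplit i
    have := hsplit j
    omega
  have hletter (t : ℕ) (ht : t < k) : w (i + 1 + t) = w (j + 1 + t) := by
    have := hmid (t + 1) (by omega) (by omega)
    have := hmid (t + 1 + 1) (by omega) (by omega)
    have := hsucc i (t + 1)
    have := hsucc j (t + 1)
    rw [Nat.add_assoc i, Nat.add_assoc j, Nat.add_comm 1 t]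
    omega
  have hfirst := hmid 1 le_rfl (by omega)
  have hlast := hmid (k + 1) (by omega) le_rfl
  have e₁ := hsucc i 0
  have e₂ := hsucc j 0
  have e₃ := hsucc i (k + 1)
  have e₄ := hsucc j (k + 1)
  simp only [window_zero, height_nil, Nat.add_zero, Nat.zero_add] at e₁ e₂
  rw [show k + 1 + 1 = k + 2 from rfl, ← Nat.add_assoc] at e₃ e₄
  refine ⟨window w (i + 1) k, window_eq_cons_append_singleton_iff.2 ⟨?_, rfl, ?_⟩,
    window_eq_cons_append_singleton_iff.2 ⟨?_, ?_, ?_⟩⟩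
  all_goals try omega
  exact congrArg List.ofFn (funext fun t => (hletter t t.isLt).symm)

lemma IsSturmian.exists_shorter_unbalanced_of_not_isFactor_one_one (hw : IsSturmian w)
    (h11 : ¬IsFactor w [1, 1]) {u : List (Fin 2)} (h1 : IsFactor w (1 :: u ++ [1]))
    (h0 : IsFactor w (0 :: u ++ [0])) :
    ∃ v, IsSturmian v ∧ ∃ s < u.length + 2, HasUnbalancedPair v s := by
  have h10 (i : ℕ) (hi : w i = 1) : w (i + 1) = 0 := by
    by_contra h
    exact h11 (isFactor_pair_iff.2 ⟨i, hi, by omega⟩)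
  obtain h | h : w 0 = 0 ∨ w 0 = 1 := by omega
  · exact ⟨_, hw.derivative h h10, exists_unbalanced_derivative h h10 hw h1 h0⟩
  · exact ⟨_, hw.shift.derivative (h10 0 h) (fun i => h10 (i + 1)),
      exists_unbalanced_derivative (h10 0 h) (fun i => h10 (i + 1)) hw.shift
        (hw.isFactor_shift_iff.2 h1) (hw.isFactor_shift_iff.2 h0)⟩

lemma IsSturmian.exists_shorter_unbalanced (hw : IsSturmian w) {u : List (Fin 2)}
    (h1 : IsFactor w (1 :: u ++ [1])) (h0 : IsFactor w (0 :: u ++ [0])) :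
    ∃ v, IsSturmian v ∧ ∃ s < u.length + 2, HasUnbalancedPair v s := by
  rcases hw.not_isFactor_zero_zero_or_one_one with h00 | h11
  · simpa using hw.rev.exists_shorter_unbalanced_of_not_isFactor_one_one (u := u.map Fin.rev)
      (by simpa [← isFactor_rev_iff (w := w)] using h00)
      (by simpa [← isFactor_rev_iff (w := w)] using h0)
      (by simpa [← isFactor_rev_iff (w := w)] using h1)
  · exact hw.exists_shorter_unbalanced_of_not_isFactor_one_one h11 h1 h0

theorem IsSturmian.height_window_le (hw : IsSturmian w) (n i j : ℕ) :
    height (window w i n) ≤ height (window w j n) + 1 := by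
  induction n using Nat.strong_induction_on generalizing w i j with
  | _ n ih =>
    by_contra! h
    obtain ⟨k, rfl⟩ : ∃ k, n = k + 2 :=
      ⟨n - 2, by have := height_le_length (window w i n); simp at this; omega⟩
    obtain ⟨u, hi, hj⟩ :=
      exists_eq_of_minimal_unbalanced (fun m hm => ih m hm hw) (i := i) (j := j) (by omega)
    have hu : u.length = k := by simpa using (congrArg List.length hi).symm
    obtain ⟨v, hv, s, hs, i', j', h'⟩ :=
      hw.exists_shorter_unbalanced (hi ▸ isFactor_window i _) (hj ▸ isFactor_window j _)
    exact absurd (ih s (by omega) hv i' j') (by omega)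

lemma hcount_eq_height {n : ℕ} (v : Fin n → Fin 2) : hcount v = height (List.ofFn v) := by
  rw [hcount, Finset.card_filter, height, List.map_ofFn, List.sum_ofFn]
  refine Finset.sum_congr rfl fun j _ => ?_
  obtain h | h : v j = 0 ∨ v j = 1 := by omega
  all_goals simp [h]

end InfiniteWord

/-- a Sturmian word is balanced: any two factors of the same length
have heights differing by at most `1`. -/
theorem sturmian_balanced (w : ℕ → Fin 2)
    (hst : ∀ n : ℕ, 1 ≤ n → Comp w n = n + 1) (n : ℕ)
    (x y : Fin n → Fin 2) (hx : x ∈ Factors w n) (hy : y ∈ Factors w n) :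
    |(hcount x : ℤ) - (hcount y : ℤ)| ≤ 1 := by
  have hw : InfiniteWord.IsSturmian w := fun n =>
    n.eq_zero_or_pos.elim (fun h => h ▸ InfiniteWord.comp_zero) (hst n)
  obtain ⟨i, hi⟩ := hx
  obtain ⟨j, hj⟩ := hy
  have hxi : hcount x = InfiniteWord.height (InfiniteWord.window w i n) := by
    rw [InfiniteWord.hcount_eq_height, funext hi]; rfl
  have hyj : hcount y = InfiniteWord.height (InfiniteWord.window w j n) := by
    rw [InfiniteWord.hcount_eq_height, funext hj]; rfl
  have := hw.height_window_le n i j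
  have := hw.height_window_le n j i
  rw [abs_le]
  omega
end

section
/- Let w be an infinite word over {0,1} such that there is a constant C with |h(x) − h(y)| ≤ C for all factors x, y of w of equal length. Then the slope π(w) = lim_{n→∞} h(w(1,n))/n exists. -/
open Filter Topology

/-! Fekete's lemma applied to `n ↦ h(w(1,n)) + C`: the balance condition, comparing the factor
`w(m+1, m+n)` with the prefix `w(1,n)`, gives `h(w(1,m+n)) ≤ h(w(1,m)) + h(w(1,n)) + C`, and the
constant `C` disappears after division by `n`. -/

theorem Subadditive.exists_tendsto_div_of_add_const {u : ℕ → ℝ} {C : ℝ}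
    (hsub : Subadditive fun n => u n + C) (hu : ∀ n, 0 ≤ u n) (hC : 0 ≤ C) :
    ∃ L, Tendsto (fun n => u n / n) atTop (𝓝 L) := by
  have hbdd : BddBelow (Set.range fun n => (u n + C) / n) :=
    ⟨0, by rintro _ ⟨n, rfl⟩; have := hu n; positivity⟩
  have hC_div : Tendsto (fun n : ℕ => C / n) atTop (𝓝 0) :=
    tendsto_const_nhds.div_atTop tendsto_natCast_atTop_atTop
  have h := (hsub.tendsto_lim hbdd).sub hC_div
  rw [sub_zero] at h
  exact ⟨hsub.lim, h.congr fun n => by rw [add_div, add_sub_cancel_right]⟩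

theorem hcount_shift (w : ℕ → Fin 2) (m n : ℕ) :
    hcount (fun j : Fin n => w (m + j)) = pcount (fun i => w (m + i)) n := by
  rw [hcount, pcount, Finset.card_filter, Finset.card_filter,
    Fin.sum_univ_eq_sum_range (fun i => if w (m + i) = 1 then 1 else 0)]

theorem pcount_add (w : ℕ → Fin 2) (m n : ℕ) :
    pcount w (m + n) = pcount w m + pcount (fun i => w (m + i)) n := by
  simp only [pcount, Finset.card_filter, Finset.sum_range_add]

theorem shift_mem_factors (w : ℕ → Fin 2) (m n : ℕ) :
    (fun j : Fin n => w (m + j)) ∈ Factors w n :=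
  ⟨m, fun _ => rfl⟩

theorem subadditive_pcount_add_of_balanced {w : ℕ → Fin 2} {C : ℝ}
    (hbal : ∀ n : ℕ, ∀ x y : Fin n → Fin 2, x ∈ Factors w n → y ∈ Factors w n →
      |(hcount x : ℝ) - (hcount y : ℝ)| ≤ C) :
    Subadditive fun n => (pcount w n : ℝ) + C := by
  intro m n
  have hfactor := (abs_le.1 <| hbal n _ _ (shift_mem_factors w m n) (shift_mem_factors w 0 n)).2
  rw [hcount_shift, hcount_shift] at hfactor
  simp only [zero_add] at hfactor
  push_cast [pcount_add]
  linarith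

/-- a word with bounded balance has a slope. -/
theorem slope_exists_of_balanced (w : ℕ → Fin 2) (C : ℝ)
    (hbal : ∀ n : ℕ, ∀ x y : Fin n → Fin 2, x ∈ Factors w n → y ∈ Factors w n →
      |(hcount x : ℝ) - (hcount y : ℝ)| ≤ C) :
    ∃ L : ℝ, Filter.Tendsto (fun n : ℕ => (pcount w n : ℝ) / n) Filter.atTop (nhds L) := by
  have hC : 0 ≤ C := by
    simpa using hbal 0 _ _ (shift_mem_factors w 0 0) (shift_mem_factors w 0 0)
  exact (subadditive_pcount_add_of_balanced hbal).exists_tendsto_div_of_add_const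
    (fun _ => Nat.cast_nonneg _) hC
end

section
/- For every irrational real number α with 0 < α < 1, there exists a Sturmian word w over {0,1} (i.e., with complexity Comp_w(n) = n+1 for all n ≥ 1) whose slope is α, namely the word w(n) = ⌊(n+1)α⌋ − ⌊nα⌋. -/
open Filter Topology

/-!
Write `x = {iα}`. The prefix sums of the factor of length `n` at position `i` are
`⌊(i + k)α⌋ - ⌊iα⌋ = ⌊x + kα⌋ = ⌊kα⌋ + [1 - x ≤ {kα}]` for `k ≤ n`, so the factor is determined
by the set of `k ∈ [1, n]` with `{kα} ≥ 1 - x`. These sets form a chain, hence the factor is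
determined by the size of its set, a number in `[0, n]`. Each value occurs: the `n` distinct
points `{kα}` cut `(0, 1)` into `n + 1` intervals, and `1 - {iα}` visits each of them because the
multiples of `α` are dense modulo `1`. The number of `1`'s in the prefix of length `n` is `⌊nα⌋`.
-/

open Set
open scoped Finset

theorem Set.ncard_range_eq_of_eq_iff {ι α β : Type*} {f : ι → α} {g : ι → β}
    (h : ∀ i j, f i = f j ↔ g i = g j) : (range f).ncard = (range g).ncard := by
  have hker : Setoid.ker f = Setoid.ker g := Setoid.ext h
  rw [← Nat.card_coe_set_eq, ← Nat.card_coe_set_eq,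
    ← Nat.card_congr (Setoid.quotientKerEquivRange f),
    ← Nat.card_congr (Setoid.quotientKerEquivRange g), hker]

theorem Finset.forall_lt_eq_iff_forall_le_sum_range_eq {M : Type*} [AddCommGroup M]
    (f g : ℕ → M) (n : ℕ) :
    (∀ j < n, f j = g j) ↔ ∀ k ≤ n, ∑ j ∈ range k, f j = ∑ j ∈ range k, g j := by
  refine ⟨fun h k hk => sum_congr rfl fun j hj => h j ((mem_range.1 hj).trans_le hk),
    fun h j hj => ?_⟩
  rw [← sum_range_succ_sub_sum f, ← sum_range_succ_sub_sum g, h j hj.le, h (j + 1) hj]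

theorem Finset.filter_le_eq_filter_le_iff_card_eq {ι β : Type*} [LinearOrder β]
    (s : Finset ι) (f : ι → β) (t t' : β) :
    {k ∈ s | t ≤ f k} = {k ∈ s | t' ≤ f k} ↔ #{k ∈ s | t ≤ f k} = #{k ∈ s | t' ≤ f k} := by
  have hmono : ∀ {t t' : β}, t ≤ t' → {k ∈ s | t' ≤ f k} ⊆ {k ∈ s | t ≤ f k} :=
    fun htt' => monotone_filter_right s fun _ _ h => htt'.trans h
  refine ⟨congrArg card, fun hcard => ?_⟩
  rcases le_total t t' with htt' | htt'
  · exact (eq_of_subset_of_card_le (hmono htt') hcard.le).symm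
  · exact eq_of_subset_of_card_le (hmono htt') hcard.ge

theorem Finset.exists_Ioo_card_filter_le_eq {β : Type*} [LinearOrder β] {lo hi : β}
    (hlohi : lo < hi) (A : Finset β) (hA : ∀ a ∈ A, a ∈ Set.Ioo lo hi) {c : ℕ} (hc : c ≤ #A) :
    ∃ u v, lo ≤ u ∧ u < v ∧ v ≤ hi ∧ ∀ t ∈ Set.Ioo u v, #{a ∈ A | t ≤ a} = c := by
  induction A using Finset.induction_on_max generalizing hi c with
  | empty =>
    obtain rfl : c = 0 := by simpa using hc
    exact ⟨lo, hi, le_rfl, hlohi, le_rfl, fun t _ => by simp⟩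
  | insert a s hlt ih =>
    have has : a ∉ s := fun h => (hlt a h).false
    have haA := hA a (mem_insert_self a s)
    rcases c with _ | c
    · refine ⟨a, hi, haA.1.le, haA.2, le_rfl, fun t ht => ?_⟩
      refine card_eq_zero.2 (filter_eq_empty_iff.2 fun x hx htx => ?_)
      rcases mem_insert.1 hx with rfl | hx
      · exact ht.1.not_ge htx
      · exact (hlt x hx).not_ge (ht.1.le.trans htx)
    · rw [card_insert_of_notMem has] at hc
      -- below `a` the new maximum adds one to the count, so recurse with `a` as upper bound
      obtain ⟨u, v, hu, huv, hva, hcount⟩ := ih haA.1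
        (fun x hx => ⟨(hA x (mem_insert_of_mem hx)).1, hlt x hx⟩) (c := c) (by omega)
      refine ⟨u, v, hu, huv, hva.trans haA.2.le, fun t ht => ?_⟩
      rw [filter_insert, if_pos (ht.2.trans_le hva).le,
        card_insert_of_notMem fun h => has (mem_filter.1 h).1, hcount t ht]

section FloorRing

variable {R : Type*} [CommRing R] [LinearOrder R] [IsStrictOrderedRing R] [FloorRing R]

theorem Int.floor_add_eq_floor_add_ite {x : R} (hx0 : 0 ≤ x) (hx1 : x < 1) (y : R) :
    ⌊x + y⌋ = ⌊y⌋ + if 1 - x ≤ Int.fract y then 1 else 0 := by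
  have hy : x + y = (x + Int.fract y) + ⌊y⌋ := by rw [← Int.self_sub_floor y]; ring
  rw [hy, Int.floor_add_intCast, add_comm]
  have := Int.fract_nonneg y
  have := Int.fract_lt_one y
  congr 1
  split_ifs <;> exact Int.floor_eq_iff.2 ⟨by push_cast; linarith, by push_cast; linarith⟩

theorem Int.floor_add_eq_floor_add_iff {x x' : R} (hx : x ∈ Ico 0 1) (hx' : x' ∈ Ico 0 1)
    (y : R) : ⌊x + y⌋ = ⌊x' + y⌋ ↔ (1 - x ≤ Int.fract y ↔ 1 - x' ≤ Int.fract y) := by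
  rw [Int.floor_add_eq_floor_add_ite hx.1 hx.2, Int.floor_add_eq_floor_add_ite hx'.1 hx'.2,
    add_right_inj]
  by_cases h : 1 - x ≤ Int.fract y <;> by_cases h' : 1 - x' ≤ Int.fract y <;> simp [h, h']

end FloorRing

namespace Irrational

variable {α : ℝ}

theorem exists_nat_fract_mul_mem_Ioo (hirr : Irrational α) {u v : ℝ} (hu : 0 ≤ u)
    (hv : v ≤ 1) (huv : u < v) : ∃ i : ℕ, Int.fract (i * α) ∈ Ioo u v := by
  have hdense : DenseRange fun i : ℕ => i • (α : UnitAddCircle) :=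
    denseRange_zsmul_iff_nsmul.1 (AddCircle.denseRange_zsmul_coe_iff.2 (by simpa using hirr))
  obtain ⟨i, t, ht, hti⟩ := hdense.exists_mem_open
    (QuotientAddGroup.isOpenMap_coe _ isOpen_Ioo) ((nonempty_Ioo.2 huv).image _)
  rw [← AddCircle.coe_nsmul, nsmul_eq_mul, QuotientAddGroup.eq_iff_sub_mem,
    AddSubgroup.mem_zmultiples_iff] at hti
  obtain ⟨z, hz⟩ := hti
  rw [zsmul_one] at hz
  refine ⟨i, ?_⟩
  rwa [Int.fract_eq_iff.2 ⟨hu.trans ht.1.le, ht.2.trans_le hv, -z, by push_cast; linarith⟩]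

theorem fract_natCast_mul_pos (hirr : Irrational α) {n : ℕ} (hn : n ≠ 0) :
    0 < Int.fract (n * α) := by
  refine (Int.fract_nonneg _).lt_of_ne' fun h => (hirr.natCast_mul hn).ne_int ⌊(n : ℝ) * α⌋ ?_
  simpa [h] using (Int.floor_add_fract ((n : ℝ) * α)).symm

theorem injective_fract_natCast_mul (hirr : Irrational α) :
    Function.Injective fun n : ℕ => Int.fract (n * α) := by
  intro a b hab
  obtain ⟨z, hz⟩ := Int.fract_eq_fract.1 hab
  by_contra hne
  refine (hirr.intCast_mul (m := a - b) (sub_ne_zero.2 (by exact_mod_cast hne))).ne_int z ?_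
  push_cast
  linarith

end Irrational

theorem factors_eq_range (w : ℕ → Fin 2) (n : ℕ) :
    Factors w n = range fun i (j : Fin n) => w (i + j) := by
  ext v
  simp [Factors, funext_iff, eq_comm]

noncomputable section

def floorStep (α : ℝ) (m : ℕ) : ℤ := ⌊((m : ℝ) + 1) * α⌋ - ⌊(m : ℝ) * α⌋

def mechanicalWord (α : ℝ) (m : ℕ) : Fin 2 := if floorStep α m = 1 then 1 else 0

def indicesAbove (α : ℝ) (n : ℕ) (t : ℝ) : Finset ℕ :=
  {k ∈ Finset.Icc 1 n | t ≤ Int.fract (k * α)}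

end

section MechanicalWord

variable {α : ℝ}

theorem floorStep_eq_zero_or_one (h0 : 0 ≤ α) (h1 : α ≤ 1) (m : ℕ) :
    floorStep α m = 0 ∨ floorStep α m = 1 := by
  have hlo : ⌊(m : ℝ) * α⌋ ≤ ⌊((m : ℝ) + 1) * α⌋ := Int.floor_le_floor (by nlinarith)
  have hhi : ⌊((m : ℝ) + 1) * α⌋ ≤ ⌊(m : ℝ) * α + 1⌋ := Int.floor_le_floor (by nlinarith)
  rw [Int.floor_add_one] at hhi
  unfold floorStep
  omega

theorem sum_floorStep (α : ℝ) (i k : ℕ) :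
    ∑ j ∈ Finset.range k, floorStep α (i + j) = ⌊((i + k : ℕ) : ℝ) * α⌋ - ⌊(i : ℝ) * α⌋ := by
  have htele := Finset.sum_range_sub (fun j => ⌊((i + j : ℕ) : ℝ) * α⌋) k
  rw [add_zero] at htele
  rw [← htele]
  refine Finset.sum_congr rfl fun j _ => ?_
  simp only [floorStep]
  push_cast
  ring_nf

theorem floor_nat_add_mul_sub_floor (α : ℝ) (i k : ℕ) :
    ⌊((i + k : ℕ) : ℝ) * α⌋ - ⌊(i : ℝ) * α⌋ = ⌊Int.fract (i * α) + k * α⌋ := by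
  rw [sub_eq_iff_eq_add', ← Int.floor_intCast_add, ← add_assoc, Int.floor_add_fract]
  push_cast
  ring_nf

theorem mechanicalWord_eq_iff (h0 : 0 ≤ α) (h1 : α ≤ 1) (m m' : ℕ) :
    mechanicalWord α m = mechanicalWord α m' ↔ floorStep α m = floorStep α m' := by
  rcases floorStep_eq_zero_or_one h0 h1 m with h | h <;>
    rcases floorStep_eq_zero_or_one h0 h1 m' with h' | h' <;> simp [mechanicalWord, h, h']

theorem pcount_mechanicalWord (h0 : 0 ≤ α) (h1 : α ≤ 1) (n : ℕ) :
    pcount (mechanicalWord α) n = ⌊n * α⌋₊ := by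
  have hstep : ∀ m, ((if mechanicalWord α m = 1 then 1 else 0 : ℕ) : ℤ) = floorStep α m := by
    intro m
    rcases floorStep_eq_zero_or_one h0 h1 m with h | h <;> simp [mechanicalWord, h]
  rw [← Nat.cast_inj (R := ℤ), Int.natCast_floor_eq_floor (by positivity), pcount,
    Finset.card_filter]
  push_cast [hstep]
  simpa using sum_floorStep α 0 n

theorem tendsto_pcount_mechanicalWord (h0 : 0 ≤ α) (h1 : α ≤ 1) :
    Tendsto (fun n : ℕ => (pcount (mechanicalWord α) n : ℝ) / n) atTop (𝓝 α) := by
  simp_rw [pcount_mechanicalWord h0 h1, mul_comm _ α]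
  exact (tendsto_nat_floor_mul_div_atTop h0).comp tendsto_natCast_atTop_atTop

theorem mechanicalWord_factor_eq_iff (h0 : 0 ≤ α) (h1 : α ≤ 1) (n i i' : ℕ) :
    ((fun j : Fin n => mechanicalWord α (i + j)) = fun j : Fin n => mechanicalWord α (i' + j)) ↔
      #(indicesAbove α n (1 - Int.fract (i * α))) =
        #(indicesAbove α n (1 - Int.fract (i' * α))) := by
  have hfract : ∀ m : ℕ, Int.fract ((m : ℝ) * α) ∈ Ico 0 1 :=
    fun m => ⟨Int.fract_nonneg _, Int.fract_lt_one _⟩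
  calc ((fun j : Fin n => mechanicalWord α (i + j)) = fun j : Fin n => mechanicalWord α (i' + j))
      ↔ ∀ j < n, floorStep α (i + j) = floorStep α (i' + j) := by
        simp only [funext_iff, Fin.forall_iff, mechanicalWord_eq_iff h0 h1]
    _ ↔ ∀ k ≤ n, ⌊Int.fract (i * α) + k * α⌋ = ⌊Int.fract (i' * α) + k * α⌋ := by
        simp only [Finset.forall_lt_eq_iff_forall_le_sum_range_eq, sum_floorStep,
          floor_nat_add_mul_sub_floor]
    _ ↔ ∀ k ∈ Finset.Icc 1 n, (1 - Int.fract (i * α) ≤ Int.fract (k * α) ↔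
          1 - Int.fract (i' * α) ≤ Int.fract (k * α)) := by
        simp only [Int.floor_add_eq_floor_add_iff (hfract i) (hfract i'), Finset.mem_Icc]
        refine ⟨fun h k hk => h k hk.2, fun h k hk => ?_⟩
        rcases Nat.eq_zero_or_pos k with rfl | hk0
        · have := (hfract i).2
          have := (hfract i').2
          simp only [Nat.cast_zero, zero_mul, Int.fract_zero]
          constructor <;> intro <;> linarith
        · exact h k ⟨hk0, hk⟩
    _ ↔ _ := Finset.filter_inj'.symm.trans (Finset.filter_le_eq_filter_le_iff_card_eq _ _ _ _)

theorem card_indicesAbove_le (α : ℝ) (n : ℕ) (t : ℝ) : #(indicesAbove α n t) ≤ n :=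
  (Finset.card_filter_le _ _).trans (by simp)

theorem exists_card_indicesAbove_eq (hirr : Irrational α) {n c : ℕ} (hc : c ≤ n) :
    ∃ i : ℕ, #(indicesAbove α n (1 - Int.fract (i * α))) = c := by
  set A := (Finset.Icc 1 n).image fun k : ℕ => Int.fract (k * α)
  have hinj := hirr.injective_fract_natCast_mul
  have hA : #A = n := by simp [A, Finset.card_image_of_injective _ hinj]
  have hA01 : ∀ a ∈ A, a ∈ Ioo (0 : ℝ) 1 := by
    simp only [A, Finset.mem_image, Finset.mem_Icc]
    rintro _ ⟨k, hk, rfl⟩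
    exact ⟨hirr.fract_natCast_mul_pos (by omega), Int.fract_lt_one _⟩
  obtain ⟨u, v, hu, huv, hv, hcount⟩ :=
    Finset.exists_Ioo_card_filter_le_eq zero_lt_one A hA01 (hc.trans_eq hA.symm)
  obtain ⟨i, hi⟩ := hirr.exists_nat_fract_mul_mem_Ioo (by linarith : 0 ≤ 1 - v) (by linarith)
    (by linarith : 1 - v < 1 - u)
  refine ⟨i, ?_⟩
  rw [← hcount (1 - Int.fract (i * α)) ⟨by linarith [hi.2], by linarith [hi.1]⟩, indicesAbove,
    Finset.filter_image, Finset.card_image_of_injective _ hinj]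

theorem comp_mechanicalWord (hirr : Irrational α) (h0 : 0 ≤ α) (h1 : α ≤ 1) (n : ℕ) :
    Comp (mechanicalWord α) n = n + 1 := by
  have hrange : (range fun i : ℕ => #(indicesAbove α n (1 - Int.fract (i * α)))) = Iic n :=
    subset_antisymm (range_subset_iff.2 fun i => card_indicesAbove_le α n _)
      fun _ hc => exists_card_indicesAbove_eq hirr hc
  rw [Comp, factors_eq_range,
    Set.ncard_range_eq_of_eq_iff fun i i' => mechanicalWord_factor_eq_iff h0 h1 n i i', hrange,
    ← Finset.coe_Iic, Set.ncard_coe_finset, Nat.card_Iic]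

end MechanicalWord

/-- for irrational `α ∈ (0,1)`, the word `w n = ⌊(n+1)α⌋ − ⌊nα⌋`
is Sturmian with slope `α`. -/
theorem sturmian_word_of_irrational (α : ℝ) (hirr : Irrational α)
    (h0 : 0 < α) (h1 : α < 1) :
    ∀ w : ℕ → Fin 2,
      (w = fun n : ℕ => if ⌊((n : ℝ) + 1) * α⌋ - ⌊(n : ℝ) * α⌋ = 1 then (1 : Fin 2) else 0) →
      (∀ n : ℕ, 1 ≤ n → Comp w n = n + 1) ∧
      Filter.Tendsto (fun n : ℕ => (pcount w n : ℝ) / n) Filter.atTop (nhds α) := by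
  rintro w rfl
  exact ⟨fun n _ => comp_mechanicalWord hirr h0.le h1.le n,
    tendsto_pcount_mechanicalWord h0.le h1.le⟩
end

section
/- Let F be a field of characteristic zero and let A be the free nonassociative F-algebra on one generator a modulo the relations that every monomial containing two or more (not necessarily disjoint) occurrences of the subword a·a equals zero. Then A satisfies the metabelian identity (x₁x₂)(x₃x₄) ≡ 0. -/
noncomputable section

open Filter Topology

/-- Is a free-magma element a single leaf? -/
def FreeMagma.isLeaf {X : Type*} : FreeMagma X → Bool
  | .of _ => true
  | .mul _ _ => false

/-- The number of occurrences of the subword `a·a` in a monomial in one generator `a`. -/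
def countSq : FreeMagma Unit → ℕ
  | .of _ => 0
  | .mul x y => countSq x + countSq y + (if x.isLeaf && y.isLeaf then 1 else 0)

variable (F : Type) [Field F] [CharZero F]

/-- The free nonassociative (non-unital) algebra on one generator `a`. -/
abbrev FA := FreeNonUnitalNonAssocAlgebra F Unit

/-- The monomial of `FA F` corresponding to a magma word. -/
def mono (m : FreeMagma Unit) : FA F := MonoidAlgebra.single m (1 : F)

/-- The relations ideal of `A`: the span of all monomials containing two or more
subwords equal to `a²`.  The algebra `A` of the paper is `FA F` modulo `relI F`. -/
def relI : Submodule F (FA F) :=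
  Submodule.span F {x : FA F | ∃ m : FreeMagma Unit, 2 ≤ countSq m ∧ x = mono F m}


/-! Each monomial of `(x₁x₂)(x₃x₄)` is a word `(uv)(wz)`. A word of the form `uv` contains `a²` at
least once (it either is `a·a` or has a factor of the same form), so `(uv)(wz)` contains it at
least twice and is a relation. -/

lemma countSq_mul (x y : FreeMagma Unit) :
    countSq (x * y) = countSq x + countSq y + if x.isLeaf && y.isLeaf then 1 else 0 :=
  rfl

lemma one_le_countSq_of_isLeaf_eq_false (x : FreeMagma Unit) (hx : x.isLeaf = false) :
    1 ≤ countSq x := by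
  induction x with
  | ih1 => simp [FreeMagma.isLeaf] at hx
  | ih2 x y ihx ihy =>
    rw [countSq_mul]
    cases hy : y.isLeaf
    · have := ihy hy
      omega
    cases hx' : x.isLeaf
    · have := ihx hx'
      omega
    simp

lemma two_le_countSq_mul_mul (x y z w : FreeMagma Unit) :
    2 ≤ countSq ((x * y) * (z * w)) := by
  have hxy := one_le_countSq_of_isLeaf_eq_false (x * y) rfl
  have hzw := one_le_countSq_of_isLeaf_eq_false (z * w) rfl
  simp only [countSq, FreeMagma.isLeaf] at hxy hzw ⊢
  omega

omit [CharZero F] in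
lemma relI_eq_supported : relI F = MonoidAlgebra.supported F F {m | 2 ≤ countSq m} := by
  rw [relI, MonoidAlgebra.supported_eq_span_single]
  congr 1
  ext x
  simp [mono, eq_comm]

/-- the algebra `A = FA F / relI F` satisfies the metabelian identity
`(x₁x₂)(x₃x₄) ≡ 0`, i.e. every such product in the free algebra lies in the
relations ideal. -/
theorem metabelian_identity (p q r s : FA F) :
    (p * q) * (r * s) ∈ relI F := by
  classical
  rw [relI_eq_supported, MonoidAlgebra.mem_supported]
  intro m hm
  obtain ⟨u, hu, v, hv, rfl⟩ := Finset.mem_mul.1 (MonoidAlgebra.support_coeff_mul_subset _ _ hm)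
  obtain ⟨x, -, y, -, rfl⟩ := Finset.mem_mul.1 (MonoidAlgebra.support_coeff_mul_subset _ _ hu)
  obtain ⟨z, -, w, -, rfl⟩ := Finset.mem_mul.1 (MonoidAlgebra.support_coeff_mul_subset _ _ hv)
  exact two_le_countSq_mul_mul x y z w
end
end

section
/- Let A be the metabelian algebra generated by one element a subject to the condition that every word containing two or more subwords equal to a² is zero. For every n ≥ 2, the 2^{n−2} elements a²·w(L_a, R_a), where w ranges over all words of length n−2 in the left-multiplication operator L_a and right-multiplication operator R_a, are linearly independent in A. -/
noncomputable section

open Filter Topology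

variable (F : Type) [Field F] [CharZero F]

/-- Apply a word in `L_a` (letter `0`) and `R_a` (letter `1`) to a magma element,
left-to-right. -/
def chain (t : FreeMagma Unit) : List (Fin 2) → FreeMagma Unit
  | [] => t
  | b :: rest => chain (if b = 1 then t * FreeMagma.of () else FreeMagma.of () * t) rest

/-- The monomial `a²`. -/
def aSq : FreeMagma Unit := FreeMagma.of () * FreeMagma.of ()

/-! The relations of `A` are spanned by the monomials with at least two factors `a²`, which form
part of the monomial basis of the free algebra; so the remaining monomials stay linearly
independent in `A`. Each `a²·w(L_a, R_a)` is a monomial with exactly one `a²`, and distinct words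
`w` give distinct monomials: the outermost product `a·t` or `t·a` (with `t` not a leaf) shows the
last letter of `w`, and peeling it off recovers the rest. -/

theorem LinearIndependent.quotient_mk_span_image_compl {ι R M : Type*} [Ring R]
    [AddCommGroup M] [Module R M] {v : ι → M} (hv : LinearIndependent R v) (s : Set ι) :
    LinearIndependent R
      (fun i : ↥sᶜ => (Submodule.Quotient.mk (v i) : M ⧸ Submodule.span R (v '' s))) := by
  refine (hv.comp _ Subtype.val_injective).map (f := (Submodule.span R (v '' s)).mkQ) ?_
  rw [Submodule.ker_mkQ, Set.range_comp, Subtype.range_coe]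
  exact (hv.disjoint_span_image disjoint_compl_right).symm

def chainStep (t : FreeMagma Unit) (b : Fin 2) : FreeMagma Unit :=
  if b = 1 then t * FreeMagma.of () else FreeMagma.of () * t

lemma chain_cons (t : FreeMagma Unit) (b : Fin 2) (l : List (Fin 2)) :
    chain t (b :: l) = chain (chainStep t b) l := rfl

lemma isLeaf_chainStep (t : FreeMagma Unit) (b : Fin 2) : (chainStep t b).isLeaf = false := by
  unfold chainStep; split <;> rfl

lemma countSq_chainStep {t : FreeMagma Unit} (ht : t.isLeaf = false) (b : Fin 2) :
    countSq (chainStep t b) = countSq t := by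
  cases t with
  | of => cases ht
  | mul x y => unfold chainStep; split <;> simp [countSq, FreeMagma.isLeaf]

lemma chainStep_inj {t t' : FreeMagma Unit} {b b' : Fin 2} (ht : t.isLeaf = false)
    (h : chainStep t b = chainStep t' b') : t = t' ∧ b = b' := by
  unfold chainStep at h
  fin_cases b <;> fin_cases b' <;> simp only [← FreeMagma.mul_eq] at h <;>
    injection h with h₁ h₂
  · exact ⟨h₂, rfl⟩
  · subst h₂; cases ht
  · subst h₁; cases ht
  · exact ⟨h₁, rfl⟩

lemma countSq_chain {t : FreeMagma Unit} (ht : t.isLeaf = false) (l : List (Fin 2)) :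
    countSq (chain t l) = countSq t := by
  induction l generalizing t with
  | nil => rfl
  | cons b l ih => rw [chain_cons, ih (isLeaf_chainStep t b), countSq_chainStep ht]

lemma chain_inj {t t' : FreeMagma Unit} {l l' : List (Fin 2)} (ht : t.isLeaf = false)
    (hl : l.length = l'.length) (h : chain t l = chain t' l') : t = t' ∧ l = l' := by
  induction l generalizing t t' l' with
  | nil => cases l' with
    | nil => exact ⟨h, rfl⟩
    | cons => simp at hl
  | cons b l ih => cases l' with
    | nil => simp at hl
    | cons b' l' =>
      obtain ⟨hstep, rfl⟩ := ih (isLeaf_chainStep t b) (Nat.succ_injective hl) h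
      obtain ⟨rfl, rfl⟩ := chainStep_inj ht hstep
      exact ⟨rfl, rfl⟩

lemma countSq_chain_aSq (l : List (Fin 2)) : countSq (chain aSq l) = 1 :=
  countSq_chain rfl l

lemma linearIndependent_mono (K : Type) [Field K] : LinearIndependent K (mono K) :=
  (MonoidAlgebra.basis (FreeMagma Unit) K).linearIndependent

lemma relI_eq_span_image (K : Type) [Field K] :
    relI K = Submodule.span K (mono K '' {m | 2 ≤ countSq m}) := by
  unfold relI
  congr 1
  ext x
  simp [eq_comm]

theorem chains_linearIndependent (n : ℕ) :
    LinearIndependent F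
      (fun u : {l : List (Fin 2) // l.length = n - 2} =>
        (Submodule.Quotient.mk (mono F (chain aSq u.1)) : FA F ⧸ relI F)) := by
  have hsq (l : List (Fin 2)) : chain aSq l ∈ {m | 2 ≤ countSq m}ᶜ := by
    simp [countSq_chain_aSq]
  have hinj : Function.Injective fun u : {l : List (Fin 2) // l.length = n - 2} =>
      (⟨chain aSq u.1, hsq u.1⟩ : ↥{m | 2 ≤ countSq m}ᶜ) := fun u v h =>
    Subtype.ext (chain_inj rfl (u.2.trans v.2.symm) (congrArg Subtype.val h)).2
  rw [relI_eq_span_image]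
  have hmonos := (linearIndependent_mono F).quotient_mk_span_image_compl {m | 2 ≤ countSq m}
  have hchains := hmonos.comp _ hinj
  exact hchains
end
end

section
/- Let A be the algebra generated by a in which every word containing two or more subwords a² is zero. If f is a multilinear nonassociative polynomial that is alternating in three of its variables, then f is a polynomial identity of A. -/
noncomputable section

open Filter Topology

variable (F : Type) [Field F] [CharZero F]

/-- Number of occurrences of the variable `i` in a magma word over `ℕ`. -/
def occ : FreeMagma ℕ → ℕ → ℕ
  | .of j, i => if j = i then 1 else 0
  | .mul x y, i => occ x i + occ y i

/-- The free nonassociative algebra on countably many variables `x₀, x₁, …`. -/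
abbrev FreeN := FreeNonUnitalNonAssocAlgebra F ℕ

/-- The monomial of `FreeN F` corresponding to a magma word. -/
def monoN (t : FreeMagma ℕ) : FreeN F := MonoidAlgebra.single t (1 : F)

/-- `P_n`: the space of multilinear polynomials in the variables `x₀, …, x_{n-1}`. -/
def Pmulti (n : ℕ) : Submodule F (FreeN F) :=
  Submodule.span F {x : FreeN F | ∃ t : FreeMagma ℕ,
    (∀ i : ℕ, occ t i = if i < n then 1 else 0) ∧ x = monoN F t}

/-- The identities of the algebra `A = FA F / relI F`: polynomials vanishing under every
substitution of elements of `A`. -/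
def IdA : Submodule F (FreeN F) :=
  ⨅ xs : ℕ → FA F,
    Submodule.comap (FreeNonUnitalNonAssocAlgebra.lift F xs : FreeN F →ₗ[F] FA F) (relI F)

/-- The `n`-th codimension of `A`: the dimension of `P_n/(P_n ∩ Id(A))`. -/
def codimA (n : ℕ) : ℕ :=
  Module.finrank F (↥(Pmulti F n) ⧸ Submodule.comap (Pmulti F n).subtype (IdA F))

/-- Renaming of variables: the algebra endomorphism of `FreeN F` induced by `σ : ℕ → ℕ`. -/
def renameVars (σ : ℕ → ℕ) : FreeN F →ₙₐ[F] FreeN F :=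
  FreeNonUnitalNonAssocAlgebra.lift F (fun i => FreeNonUnitalNonAssocAlgebra.of F (σ i))

/-!
By multilinearity it suffices to substitute words in `a` for the variables. If two of the three
alternating variables receive the same word, the substitution is invariant under their
transposition, so the value equals its own negative and vanishes. Otherwise the three words are
distinct, so two of them differ from `a` and hence each contains a subword `a²`; every monomial of
`f` contains both variables, so it evaluates to a word with at least two subwords `a²`.
-/

open FreeNonUnitalNonAssocAlgebra Function

lemma eq_of_countSq_eq_zero {w : FreeMagma Unit} (h : countSq w = 0) : w = FreeMagma.of () := by
  induction w with
  | ih1 x => rfl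
  | ih2 x y ihx ihy =>
    simp only [countSq, Nat.add_eq_zero_iff] at h
    obtain ⟨⟨hx, hy⟩, hxy⟩ := h
    simp [ihx hx, ihy hy, FreeMagma.isLeaf] at hxy

lemma countSq_pos {w : FreeMagma Unit} (h : w ≠ FreeMagma.of ()) : 0 < countSq w :=
  Nat.pos_of_ne_zero (h ∘ eq_of_countSq_eq_zero)

lemma sum_occ_mul_countSq_le (u : ℕ → FreeMagma Unit) (s : Finset ℕ) (t : FreeMagma ℕ) :
    ∑ l ∈ s, occ t l * countSq (u l) ≤ countSq (FreeMagma.lift u t) := by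
  induction t with
  | ih1 i =>
    simp only [occ, ite_mul, one_mul, zero_mul, Finset.sum_ite_eq, FreeMagma.lift_of]
    split_ifs <;> simp
  | ih2 x y ihx ihy =>
    simp only [occ, add_mul, Finset.sum_add_distrib, map_mul, countSq]
    omega

lemma FreeMagma.lift_congr_of_occ_pos {β : Type*} [Mul β] {xs ys : ℕ → β} (t : FreeMagma ℕ)
    (h : ∀ l, 0 < occ t l → xs l = ys l) : FreeMagma.lift xs t = FreeMagma.lift ys t := by
  induction t with
  | ih1 i => exact h i (by simp [occ])
  | ih2 x y ihx ihy =>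
    simp only [occ] at h
    rw [map_mul, map_mul, ihx fun l hl => h l (by omega), ihy fun l hl => h l (by omega)]

section

variable {K : Type} [Field K] {A : Type*} [NonUnitalNonAssocSemiring A] [Module K A]
  [IsScalarTower K A A] [SMulCommClass K A A]

lemma FreeMagma.exists_linearMap_lift_update (xs : ℕ → A) {l : ℕ} (t : FreeMagma ℕ)
    (ht : occ t l = 1) : ∃ L : A →ₗ[K] A, ∀ v, FreeMagma.lift (update xs l v) t = L v := by
  induction t with
  | ih1 i =>
    obtain rfl : i = l := by by_contra h; simp [occ, h] at ht
    exact ⟨LinearMap.id, fun v => by simp⟩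
  | ih2 x y ihx ihy =>
    simp only [occ] at ht
    have lift_update_of_occ_eq_zero : ∀ z, occ z l = 0 → ∀ v,
        FreeMagma.lift (update xs l v) z = FreeMagma.lift xs z := fun z hz v =>
      FreeMagma.lift_congr_of_occ_pos z fun m hm => update_of_ne (by rintro rfl; omega) _ _
    rcases Nat.eq_zero_or_pos (occ x l) with hx | hx
    · obtain ⟨L, hL⟩ := ihy (by omega)
      exact ⟨LinearMap.mulLeft K (FreeMagma.lift xs x) ∘ₗ L, fun v => by
        simp [lift_update_of_occ_eq_zero x hx, hL]⟩
    · obtain ⟨L, hL⟩ := ihx (by omega)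
      exact ⟨LinearMap.mulRight K (FreeMagma.lift xs y) ∘ₗ L, fun v => by
        simp [lift_update_of_occ_eq_zero y (by omega), hL]⟩

lemma lift_monoN (xs : ℕ → A) (t : FreeMagma ℕ) :
    lift K xs (monoN K t) = FreeMagma.lift xs t := by
  simp [lift, monoN]

lemma lift_renameVars (ys : ℕ → A) (σ : ℕ → ℕ) (g : FreeN K) :
    lift K ys (renameVars K σ g) = lift K (ys ∘ σ) g := by
  have h : (lift K ys).comp (renameVars K σ) = lift K (ys ∘ σ) := by
    refine hom_ext K fun x => ?_
    simp [renameVars]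
  exact congr($h g)

end

variable {K : Type} [Field K] {n : ℕ} {f : FreeN K}

lemma lift_eq_zero_of_renameVars_eq_neg [NeZero (2 : K)] {σ : ℕ → ℕ}
    (hσ : renameVars K σ f = -f) {ys : ℕ → FA K} (hys : ys ∘ σ = ys) :
    lift K ys f = 0 := by
  have h : lift K ys f = -lift K ys f := by
    rw [← map_neg, ← hσ, lift_renameVars, hys]
  have h2 : (2 : K) • lift K ys f = 0 := by
    rw [two_smul]; nth_rewrite 2 [h]; exact add_neg_cancel _
  exact (smul_eq_zero_iff_right two_ne_zero).mp h2

lemma lift_mono_comp (u : ℕ → FreeMagma Unit) (t : FreeMagma ℕ) :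
    FreeMagma.lift (mono K ∘ u) t = mono K (FreeMagma.lift u t) := by
  induction t with
  | ih1 i => rfl
  | ih2 x y ihx ihy =>
    rw [map_mul, map_mul, ihx, ihy]
    exact ((MonoidAlgebra.ofMagma K _).map_mul _ _).symm

lemma Pmulti.lift_congr (hf : f ∈ Pmulti K n) {xs ys : ℕ → FA K}
    (h : ∀ l < n, xs l = ys l) : lift K xs f = lift K ys f := by
  refine LinearMap.eqOn_span' (f := (lift K xs : FreeN K →ₗ[K] FA K)) (g := lift K ys) ?_ hf
  rintro _ ⟨t, ht, rfl⟩
  change lift K xs (monoN K t) = lift K ys (monoN K t)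
  rw [lift_monoN, lift_monoN]
  exact FreeMagma.lift_congr_of_occ_pos t fun l hl => h l (by by_contra hc; simp [ht l, hc] at hl)

lemma Pmulti.exists_linearMap_lift_update (hf : f ∈ Pmulti K n) (xs : ℕ → FA K) {l : ℕ}
    (hl : l < n) : ∃ L : FA K →ₗ[K] FA K, ∀ v, lift K (update xs l v) f = L v := by
  induction hf using Submodule.span_induction with
  | mem g hg =>
    obtain ⟨t, ht, rfl⟩ := hg
    simpa only [lift_monoN] using FreeMagma.exists_linearMap_lift_update xs t (by simp [ht l, hl])
  | zero => exact ⟨0, by simp⟩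
  | add _ _ _ _ hg hh =>
    obtain ⟨L, hL⟩ := hg
    obtain ⟨M, hM⟩ := hh
    exact ⟨L + M, by simp [hL, hM]⟩
  | smul c _ _ hg =>
    obtain ⟨L, hL⟩ := hg
    exact ⟨c • L, by simp [hL]⟩

def Fin.extendByZero {M : Type*} [Zero M] (m : Fin n → M) (l : ℕ) : M :=
  if h : l < n then m ⟨l, h⟩ else 0

lemma Fin.extendByZero_update {M : Type*} [Zero M] [DecidableEq (Fin n)] (m : Fin n → M)
    (i : Fin n) (x : M) : extendByZero (update m i x) = update (extendByZero m) i x := by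
  funext l
  by_cases hl : l < n
  · by_cases hli : l = i
    · subst hli; simp [extendByZero]
    · have : (⟨l, hl⟩ : Fin n) ≠ i := fun h => hli (congrArg Fin.val h)
      simp [extendByZero, hl, this, hli]
  · have : l ≠ i := fun h => hl (h ▸ i.isLt)
    simp [extendByZero, hl, this]

def Pmulti.evalMultilinear (hf : f ∈ Pmulti K n) :
    MultilinearMap K (fun _ : Fin n => FA K) (FA K) where
  toFun m := lift K (Fin.extendByZero m) f
  map_update_add' m i x y := by
    obtain ⟨L, hL⟩ := Pmulti.exists_linearMap_lift_update hf (Fin.extendByZero m) i.isLt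
    simp only [Fin.extendByZero_update, hL, map_add]
  map_update_smul' m i c x := by
    obtain ⟨L, hL⟩ := Pmulti.exists_linearMap_lift_update hf (Fin.extendByZero m) i.isLt
    simp only [Fin.extendByZero_update, hL, map_smul]

lemma Pmulti.lift_mem_of_forall_mono (hf : f ∈ Pmulti K n) {I : Submodule K (FA K)}
    (hmono : ∀ u : ℕ → FreeMagma Unit, lift K (mono K ∘ u) f ∈ I) (xs : ℕ → FA K) :
    lift K xs f ∈ I := by
  have hzero : I.mkQ.compMultilinearMap (evalMultilinear hf) = 0 := by
    refine Module.Basis.ext_multilinear (fun _ => MonoidAlgebra.basis _ K) fun v => ?_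
    let u l := if h : l < n then v ⟨l, h⟩ else FreeMagma.of ()
    have hu : lift K (Fin.extendByZero fun i => MonoidAlgebra.single (v i) 1) f
        = lift K (mono K ∘ u) f :=
      Pmulti.lift_congr hf fun l hl => by simp [Fin.extendByZero, u, hl, mono]
    simpa [evalMultilinear, Submodule.Quotient.mk_eq_zero, hu] using hmono u
  have hxs : lift K xs f = evalMultilinear hf (fun i => xs i) :=
    Pmulti.lift_congr hf fun l hl => by simp [Fin.extendByZero, hl]
  simpa [hxs, Submodule.Quotient.mk_eq_zero] using congr($hzero fun i => xs i)

lemma Pmulti.lift_mono_mem_relI (hf : f ∈ Pmulti K n) (u : ℕ → FreeMagma Unit) {p q : ℕ}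
    (hpq : p ≠ q) (hp : p < n) (hq : q < n) (hup : 0 < countSq (u p))
    (huq : 0 < countSq (u q)) : lift K (mono K ∘ u) f ∈ relI K := by
  let evalU : FreeN K →ₗ[K] FA K := lift K (mono K ∘ u)
  refine (Submodule.span_le (p := (relI K).comap evalU)).mpr ?_ hf
  rintro _ ⟨t, ht, rfl⟩
  refine Submodule.subset_span ⟨FreeMagma.lift u t, ?_, ?_⟩
  · have hcount := sum_occ_mul_countSq_le u {p, q} t
    rw [Finset.sum_pair hpq, ht p, ht q, if_pos hp, if_pos hq] at hcount
    omega
  · change lift K _ (monoN K t) = _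
    rw [lift_monoN, lift_mono_comp]

lemma comp_swap_eq_self {α β : Type*} [DecidableEq α] {g : α → β} {p q : α}
    (h : g p = g q) : g ∘ Equiv.swap p q = g := by
  rw [Equiv.comp_swap_eq_update, h, update_eq_self, ← h, update_eq_self]

lemma Pmulti.lift_mono_mem_relI_of_alternating [NeZero (2 : K)] (hf : f ∈ Pmulti K n)
    {i j k : ℕ} (hi : i < n) (hj : j < n) (hk : k < n)
    (hij : i ≠ j) (hjk : j ≠ k) (hik : i ≠ k)
    (altij : renameVars K (Equiv.swap i j) f = -f)
    (altjk : renameVars K (Equiv.swap j k) f = -f)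
    (altik : renameVars K (Equiv.swap i k) f = -f) (u : ℕ → FreeMagma Unit) :
    lift K (mono K ∘ u) f ∈ relI K := by
  have of_eq : ∀ {p q}, u p = u q → renameVars K (Equiv.swap p q) f = -f →
      lift K (mono K ∘ u) f ∈ relI K := fun hpq halt => by
    rw [lift_eq_zero_of_renameVars_eq_neg halt (comp_swap_eq_self (congrArg (mono K) hpq))]
    exact zero_mem _
  by_cases h1 : u i = u j; · exact of_eq h1 altij
  by_cases h2 : u j = u k; · exact of_eq h2 altjk
  by_cases h3 : u i = u k; · exact of_eq h3 altik
  by_cases hui : u i = FreeMagma.of ()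
  · exact lift_mono_mem_relI hf u hjk hj hk (countSq_pos (hui ▸ Ne.symm h1))
      (countSq_pos (hui ▸ Ne.symm h3))
  by_cases huj : u j = FreeMagma.of ()
  · exact lift_mono_mem_relI hf u hik hi hk (countSq_pos hui) (countSq_pos (huj ▸ Ne.symm h2))
  · exact lift_mono_mem_relI hf u hij hi hj (countSq_pos hui) (countSq_pos huj)

/-- a multilinear polynomial alternating in three of its variables is an
identity of `A`. -/
theorem alternating_three_is_identity (n : ℕ) (f : FreeN F) (hf : f ∈ Pmulti F n)
    (i j k : ℕ) (hi : i < n) (hj : j < n) (hk : k < n)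
    (hij : i ≠ j) (hjk : j ≠ k) (hik : i ≠ k)
    (altij : renameVars F (Equiv.swap i j) f = -f)
    (altjk : renameVars F (Equiv.swap j k) f = -f)
    (altik : renameVars F (Equiv.swap i k) f = -f) :
    f ∈ IdA F :=
  Submodule.mem_iInf _ |>.mpr <| Pmulti.lift_mem_of_forall_mono hf <|
    Pmulti.lift_mono_mem_relI_of_alternating hf hi hj hk hij hjk hik altij altjk altik
end
end

section
/- Let A be the algebra generated by a with every word containing two or more subwords a² equal to zero, and let T be a fixed arrangement of parentheses such that P_n^T(A) ≠ 0. Then for 1 ≤ i, j ≤ n−2 the highest weight vectors g_i(x₁,x₂) = (x̄₁x₁)T_{1,x₁}⋯T_{i−1,x₁} T̄_{i,x₂} T_{i+1,x₁}⋯T_{n−2,x₁} and g_j(x₁,x₂) (defined analogously) are linearly dependent modulo Id(A): under every nonzero evaluation in A they take the same value. -/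
noncomputable section

open Filter Topology

variable (F : Type) [Field F] [CharZero F]

/-- Apply a list of (operator letter, argument) pairs to a magma word, left-to-right:
letter `0` is left multiplication by the argument, letter `1` is right multiplication. -/
def chainArgs : FreeMagma ℕ → List (Fin 2 × FreeMagma ℕ) → FreeMagma ℕ
  | t, [] => t
  | t, (b, x) :: r => chainArgs (if b = 1 then t * x else x * t) r

/-- The monomial `(u·x₀)T₁,x₀ ⋯ T_{i},v ⋯ T_{n-2},x₀` (the `i`-th operator, 0-indexed,
takes the argument `v`, all others take `x₀`). -/
def giMono (T : List (Fin 2)) (i : ℕ) (u v : FreeMagma ℕ) : FreeMagma ℕ :=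
  chainArgs (u * FreeMagma.of 0)
    (T.zip ((List.range T.length).map fun k => if k = i then v else FreeMagma.of 0))

/-- The highest weight vector `g_i(x₀,x₁)`, alternating in the first occurrence of `x₀`
and the occurrence of `x₁` at operator position `i`. -/
def gPoly (T : List (Fin 2)) (i : ℕ) : FreeN F :=
  monoN F (giMono T i (FreeMagma.of 0) (FreeMagma.of 1)) -
    monoN F (giMono T i (FreeMagma.of 1) (FreeMagma.of 0))

/-- The generic multilinear monomial `x₀x₁ T₁,x₂ ⋯ T_{n-2},x_{n-1}` with arrangement `T`. -/
def genericMono (T : List (Fin 2)) : FreeMagma ℕ :=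
  chainArgs (FreeMagma.of 0 * FreeMagma.of 1)
    (T.zip ((List.range T.length).map fun k => FreeMagma.of (k + 2)))

/-! Every product in `A` is a combination of monomials containing a square, so the product of
two products lies in the relations ideal. Hence, once the first factor `u·x₀` of a monomial of
`g_i` has been formed, every further argument `x` may be replaced by `c(x)·a`, where `c(x)` is
the coefficient of `a` in `x`. Modulo `relI`, `g_i(x₀, x₁)` therefore evaluates to
`c(x₁)c(x₀)^{n-3}·W(x₀x₀) − c(x₀)^{n-2}·W(x₁x₀)`,
with `W` the operator word `T` applied with every argument equal to `a`;
this does not depend on `i`. -/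

open MonoidAlgebra
open scoped Pointwise

theorem MonoidAlgebra.mul_mem_supported {k G : Type*} [Semiring k] [Mul G] {s t u : Set G}
    (h : s * t ⊆ u) {x y : k[G]} (hx : x ∈ supported k k s) (hy : y ∈ supported k k t) :
    x * y ∈ supported k k u := by
  classical
  intro m hm
  obtain ⟨a, ha, b, hb, rfl⟩ := Finset.mem_mul.mp (support_coeff_mul_subset x y hm)
  exact h (Set.mul_mem_mul (hx ha) (hy hb))

theorem isLeaf_of_countSq_eq_zero : ∀ {m : FreeMagma Unit}, countSq m = 0 → m.isLeaf
  | .of _, _ => rfl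
  | .mul a b, h => by
    rw [countSq] at h
    have ha := isLeaf_of_countSq_eq_zero (m := a) (by omega)
    have hb := isLeaf_of_countSq_eq_zero (m := b) (by omega)
    simp [ha, hb] at h

theorem one_le_countSq_mul (x y : FreeMagma Unit) : 1 ≤ countSq (x * y) :=
  Nat.one_le_iff_ne_zero.2 fun h => Bool.false_ne_true (isLeaf_of_countSq_eq_zero h)

section MulOp

variable (R : Type*) {A : Type*} [CommSemiring R] [NonUnitalNonAssocSemiring A] [Module R A]
  [IsScalarTower R A A] [SMulCommClass R A A]

def mulOp (b : Fin 2) (x : A) : A →ₗ[R] A :=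
  if b = 1 then LinearMap.mulRight R x else LinearMap.mulLeft R x

def evalChain : List (Fin 2 × A) → A →ₗ[R] A
  | [] => LinearMap.id
  | (b, x) :: r => evalChain r ∘ₗ mulOp R b x

theorem evalChain_cons (b : Fin 2) (x : A) (r : List (Fin 2 × A)) (t : A) :
    evalChain R ((b, x) :: r) t = evalChain R r (mulOp R b x t) := rfl

end MulOp

theorem List.prod_map_range_ite_eq {M : Type*} [CommMonoid M] (p q : M) {L i : ℕ} (hi : i < L) :
    ((List.range L).map fun k => if k = i then q else p).prod = q * p ^ (L - 1) := by
  have hfin : ((List.range L).map fun k => if k = i then q else p).prod =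
      ∏ k ∈ Finset.range L, if k = i then q else p := rfl
  rw [hfin, ← Finset.mul_prod_erase _ _ (Finset.mem_range.2 hi), if_pos rfl,
    Finset.prod_congr rfl fun k hk => if_neg (Finset.ne_of_mem_erase hk), Finset.prod_const,
    Finset.card_erase_of_mem (Finset.mem_range.2 hi), Finset.card_range]

section FreeAlgebra

variable (K : Type) [Field K]

theorem monoN_mul (s t : FreeMagma ℕ) : monoN K (s * t) = monoN K s * monoN K t := by
  rw [monoN, monoN, monoN, single_mul_single, one_mul]

theorem map_monoN_chainArgs {A : Type*} [NonUnitalNonAssocSemiring A] [Module K A]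
    [IsScalarTower K A A] [SMulCommClass K A A] (f : FreeN K →ₙₐ[K] A) :
    ∀ (l : List (Fin 2 × FreeMagma ℕ)) (t : FreeMagma ℕ),
      f (monoN K (chainArgs t l)) =
        evalChain K (l.map fun p => (p.1, f (monoN K p.2))) (f (monoN K t))
  | [], _ => rfl
  | (b, x) :: r, t => by
    rw [chainArgs, map_monoN_chainArgs f r, List.map_cons, evalChain_cons]
    congr 1
    by_cases hb : b = 1 <;> simp [mulOp, hb, monoN_mul]

def sqFiltration (p : ℕ) : Submodule K (FA K) := supported K K {m | p ≤ countSq m}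

theorem relI_eq_sqFiltration : relI K = sqFiltration K 2 := by
  rw [relI, sqFiltration, supported_eq_span_single]
  congr 1
  ext x
  simp [mono, eq_comm]

theorem mem_sqFiltration_zero (x : FA K) : x ∈ sqFiltration K 0 :=
  mem_supported.2 fun _ _ => Nat.zero_le _

theorem mul_mem_sqFiltration_add {p q : ℕ} {x y : FA K} (hx : x ∈ sqFiltration K p)
    (hy : y ∈ sqFiltration K q) : x * y ∈ sqFiltration K (p + q) :=
  mul_mem_supported (fun _ ⟨_, ha, _, hb, hab⟩ =>
    hab ▸ (Nat.add_le_add ha hb).trans (Nat.le_add_right _ _)) hx hy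

theorem mul_mem_sqFiltration_one (x y : FA K) : x * y ∈ sqFiltration K 1 :=
  mul_mem_supported (fun _ ⟨a, _, b, _, hab⟩ => hab ▸ one_le_countSq_mul a b)
    (mem_sqFiltration_zero K x) (mem_sqFiltration_zero K y)

def gen : FA K := mono K (.of ())

def coeffGen (x : FA K) : K := x.coeff (.of ())

theorem sub_coeffGen_smul_gen_mem_sqFiltration_one (x : FA K) :
    x - coeffGen K x • gen K ∈ sqFiltration K 1 := by
  refine mem_supported'.2 fun m hm => ?_
  match m with
  | .of () => simp [coeffGen, gen, mono]
  | .mul a b => exact absurd (one_le_countSq_mul a b) hm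

theorem mulOp_mem_sqFiltration_one (b : Fin 2) (x t : FA K) :
    mulOp K b x t ∈ sqFiltration K 1 := by
  unfold mulOp
  split_ifs <;> exact mul_mem_sqFiltration_one K _ _

theorem mulOp_smodEq_coeffGen_smul (b : Fin 2) (x : FA K) {t : FA K}
    (ht : t ∈ sqFiltration K 1) :
    mulOp K b x t ≡ coeffGen K x • mulOp K b (gen K) t [SMOD relI K] := by
  have hx := sub_coeffGen_smul_gen_mem_sqFiltration_one K x
  rw [SModEq.sub_mem, relI_eq_sqFiltration]
  unfold mulOp
  split_ifs
  · simpa [mul_sub, mul_smul_comm] using mul_mem_sqFiltration_add K ht hx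
  · simpa [sub_mul, smul_mul_assoc] using mul_mem_sqFiltration_add K hx ht

theorem evalChain_smodEq {x y : FA K} (l : List (Fin 2 × FA K)) (h : x ≡ y [SMOD relI K]) :
    evalChain K l x ≡ evalChain K l y [SMOD relI K] := by
  induction l generalizing x y with
  | nil => exact h
  | cons p r ih =>
    refine ih ?_
    rw [SModEq.sub_mem, relI_eq_sqFiltration] at h ⊢
    rw [← map_sub]
    unfold mulOp
    split_ifs
    exacts [mul_mem_sqFiltration_add K h (mem_sqFiltration_zero K p.2),
      mul_mem_sqFiltration_add K (mem_sqFiltration_zero K p.2) h]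

theorem evalChain_smodEq_gen (l : List (Fin 2 × FA K)) {t : FA K} (ht : t ∈ sqFiltration K 1) :
    evalChain K l t ≡ (l.map fun p => coeffGen K p.2).prod •
      evalChain K (l.map fun p => (p.1, gen K)) t [SMOD relI K] := by
  induction l generalizing t with
  | nil => simp [evalChain]
  | cons p r ih =>
    obtain ⟨b, x⟩ := p
    calc evalChain K r (mulOp K b x t)
        ≡ evalChain K r (coeffGen K x • mulOp K b (gen K) t) [SMOD relI K] :=
          evalChain_smodEq K r (mulOp_smodEq_coeffGen_smul K b x ht)
      _ = coeffGen K x • evalChain K r (mulOp K b (gen K) t) := map_smul _ _ _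
      _ ≡ coeffGen K x • ((r.map fun p => coeffGen K p.2).prod •
            evalChain K (r.map fun p => (p.1, gen K)) (mulOp K b (gen K) t)) [SMOD relI K] :=
          (ih (mulOp_mem_sqFiltration_one K b _ t)).smul _
      _ = _ := by simp [evalChain_cons, mul_smul]

theorem map_monoN_giMono_smodEq (f : FreeN K →ₙₐ[K] FA K) {T : List (Fin 2)} {i : ℕ}
    (hi : i < T.length) (u v : FreeMagma ℕ) :
    f (monoN K (giMono T i u v)) ≡
      (coeffGen K (f (monoN K v)) * coeffGen K (f (monoN K (.of 0))) ^ (T.length - 1)) •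
        evalChain K (T.map fun b => (b, gen K)) (f (monoN K u) * f (monoN K (.of 0)))
        [SMOD relI K] := by
  rw [giMono, map_monoN_chainArgs, monoN_mul, map_mul]
  set args := (List.range T.length).map fun k => if k = i then v else FreeMagma.of 0
  have hlen : T.length = args.length := by simp [args]
  have hfst : (T.zip args).map Prod.fst = T := List.map_fst_zip hlen.le
  have hsnd : (T.zip args).map Prod.snd = args := List.map_snd_zip hlen.ge
  convert evalChain_smodEq_gen K _ (mul_mem_sqFiltration_one K _ _) using 3
  · rw [List.map_map, ← List.prod_map_range_ite_eq _ _ hi]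
    change _ = ((T.zip args).map ((fun w => coeffGen K (f (monoN K w))) ∘ Prod.snd)).prod
    rw [← List.map_map, hsnd, List.map_map]
    exact congrArg List.prod (List.map_congr_left fun _ _ =>
      (apply_ite (fun w => coeffGen K (f (monoN K w))) _ _ _).symm)
  · conv_lhs => rw [← hfst]
    simp only [List.map_map]
    rfl

theorem map_gPoly_smodEq (f : FreeN K →ₙₐ[K] FA K) {T : List (Fin 2)} {i : ℕ}
    (hi : i < T.length) :
    f (gPoly K T i) ≡
      (coeffGen K (f (monoN K (.of 1))) * coeffGen K (f (monoN K (.of 0))) ^ (T.length - 1)) •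
          evalChain K (T.map fun b => (b, gen K)) (f (monoN K (.of 0)) * f (monoN K (.of 0))) -
        (coeffGen K (f (monoN K (.of 0))) * coeffGen K (f (monoN K (.of 0))) ^ (T.length - 1)) •
          evalChain K (T.map fun b => (b, gen K)) (f (monoN K (.of 1)) * f (monoN K (.of 0)))
      [SMOD relI K] := by
  rw [gPoly, map_sub]
  exact (map_monoN_giMono_smodEq K f hi _ _).sub (map_monoN_giMono_smodEq K f hi _ _)

end FreeAlgebra

theorem gPoly_dependent (T : List (Fin 2)) (i j : ℕ) (hi : i < T.length) (hj : j < T.length) :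
    ∀ xs : ℕ → FA F,
      FreeNonUnitalNonAssocAlgebra.lift F xs (gPoly F T i) -
        FreeNonUnitalNonAssocAlgebra.lift F xs (gPoly F T j) ∈ relI F := fun xs =>
  SModEq.sub_mem.1 <| (map_gPoly_smodEq F (FreeNonUnitalNonAssocAlgebra.lift F xs) hi).trans
    (map_gPoly_smodEq F (FreeNonUnitalNonAssocAlgebra.lift F xs) hj).symm
end
end
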